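/- arXiv:2405.18237 — 11 statements merged into one kernel-verified Lean document; each statement's English description precedes it below -/
import Mathlib

section
/- Let d ≥ 2, let x be a standard Gaussian random vector in ℝ^d (i.e., x has law N(0, I_d)), let θ̄, θ̄* ∈ ℝ^d be nonzero and non-parallel, set ρ := ⟨θ̄,θ̄*⟩/(‖θ̄‖·‖θ̄*‖) and D := 1 + (1−ρ²)‖θ̄*‖². Then for every ν ≠ 0: E_x[ (2π⟨x,θ̄⟩²)^{−1/2} · exp( −(ν + ⟨x,θ̄*⟩⟨x,θ̄⟩)² / (2⟨x,θ̄⟩²) ) ] = (π‖θ̄‖)^{−1} · D^{−1/2} · exp( −ρ‖θ̄*‖(ν/‖θ̄‖)/D ) · K₀( √(1+‖θ̄*‖²)·|ν|/(‖θ̄‖·D) ). -/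
/-!
Write `θb = ‖θb‖ • e₀` and `θbs = a • e₀ + τ • e₁` for an orthonormal pair `(e₀, e₁)`, so that
`a = ρ ‖θbs‖` and `D = 1 + τ²`. The coordinates `u = ⟪e₀, x⟫` and `v = ⟪e₁, x⟫` are independent
standard Gaussians, and the integrand is `(‖θb‖ |u|)⁻¹ φ(ν / (‖θb‖ u) + a u + τ v)` with `φ` the
standard normal density. Integrating out `v` convolves two Gaussians and leaves the `N(0, D)`
density. Expanding the square in `u` then leaves a constant times
`∫ |u|⁻¹ exp (-(α u² + β / u²)) du`, and the substitution `u = r e^{t/2}` with `r⁴ = β / α`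
turns this into `2 K₀(2 √(α β))`.
-/

open MeasureTheory ProbabilityTheory Real
open scoped RealInnerProductSpace

/-- The standard Gaussian measure `N(0, I_d)` on `ℝ^d`, the product of `d`
copies of the standard normal distribution. -/
noncomputable def stdGaussian (d : ℕ) : Measure (EuclideanSpace ℝ (Fin d)) :=
  (Measure.pi fun _ : Fin d => gaussianReal 0 1).map (EuclideanSpace.equiv (Fin d) ℝ).symm

/-- The modified Bessel function of the second kind of order 0:
`K₀ z = ∫₀^∞ exp (-z cosh t) dt`. -/
noncomputable def K0 (z : ℝ) : ℝ := ∫ t in Set.Ioi (0 : ℝ), Real.exp (-z * Real.cosh t)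

section OrthonormalPair

variable {E : Type*} [NormedAddCommGroup E] [InnerProductSpace ℝ E]

lemma exists_orthonormal_pair_of_not_parallel {x y : E} (hx : x ≠ 0) (hy : y ≠ 0)
    (hxy : ¬ ∃ c : ℝ, x = c • y) :
    ∃ e : Fin 2 → E, Orthonormal ℝ e ∧ ∃ τ : ℝ, x = ‖x‖ • e 0 ∧
      y = (⟪x, y⟫ / ‖x‖) • e 0 + τ • e 1 ∧ ‖y‖ ^ 2 = (⟪x, y⟫ / ‖x‖) ^ 2 + τ ^ 2 := by
  set a := ⟪x, y⟫ / ‖x‖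
  set e₁ := ‖x‖⁻¹ • x
  set w := y - a • e₁
  have he₁ : ‖e₁‖ = 1 := norm_smul_inv_norm hx
  have hx_eq : x = ‖x‖ • e₁ := by rw [smul_inv_smul₀ (norm_ne_zero_iff.2 hx)]
  have hw : w ≠ 0 := by
    intro h
    have ha : a ≠ 0 := by rintro ha; simp [w, ha, hy] at h
    refine hxy ⟨‖x‖ / a, ?_⟩
    rw [sub_eq_zero.1 h, smul_smul, div_mul_cancel₀ _ ha, ← hx_eq]
  have he₁w : ⟪e₁, w⟫ = 0 := by
    rw [inner_sub_right, real_inner_smul_right, real_inner_self_eq_norm_sq, he₁,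
      real_inner_smul_left]
    ring
  have he₂ : ‖‖w‖⁻¹ • w‖ = 1 := norm_smul_inv_norm hw
  refine ⟨![e₁, ‖w‖⁻¹ • w], ?_, ‖w‖, ?_⟩
  · simp [he₁, he₂, real_inner_smul_right, he₁w]
  simp only [Matrix.cons_val_zero, Matrix.cons_val_one, smul_inv_smul₀ (norm_ne_zero_iff.2 hw)]
  have hy_eq : y = a • e₁ + w := (add_sub_cancel _ _).symm
  refine ⟨hx_eq, hy_eq, ?_⟩
  rw [hy_eq, norm_add_sq_real, real_inner_smul_left, he₁w, norm_smul, he₁, norm_eq_abs,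
    mul_one, sq_abs]
  ring

end OrthonormalPair

lemma integral_prod_of_nonneg {α β : Type*} [MeasurableSpace α] [MeasurableSpace β]
    {μ : Measure α} {ν : Measure β} [SFinite μ] [SFinite ν] {f : α × β → ℝ} (hf_nonneg : 0 ≤ f)
    (hf : AEStronglyMeasurable f (μ.prod ν))
    (h_sec : ∀ᵐ x ∂μ, Integrable (fun y => f (x, y)) ν)
    (h_int : Integrable (fun x => ∫ y, f (x, y) ∂ν) μ) :
    ∫ z, f z ∂(μ.prod ν) = ∫ x, ∫ y, f (x, y) ∂ν ∂μ := by
  refine integral_prod f ((integrable_prod_iff hf).2 ⟨h_sec, ?_⟩)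
  simpa only [norm_of_nonneg (hf_nonneg _)] using h_int

section StandardGaussian

variable {E : Type*} [NormedAddCommGroup E] [InnerProductSpace ℝ E] [FiniteDimensional ℝ E]
  [MeasurableSpace E] [BorelSpace E]

lemma stdGaussian_eq_stdGaussian_euclideanSpace (d : ℕ) :
    stdGaussian d = ProbabilityTheory.stdGaussian (EuclideanSpace ℝ (Fin d)) :=
  map_pi_eq_stdGaussian

lemma map_inner_stdGaussian_of_orthonormal {ι : Type*} [Fintype ι] {e : ι → E}
    (he : Orthonormal ℝ e) :
    (ProbabilityTheory.stdGaussian E).map (fun x => WithLp.toLp 2 fun i => ⟪e i, x⟫)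
      = ProbabilityTheory.stdGaussian (EuclideanSpace ℝ ι) := by
  refine Measure.ext_of_charFun (E := EuclideanSpace ℝ ι) (funext fun t => ?_)
  have hinner (x : E) : ⟪WithLp.toLp 2 (fun i => ⟪e i, x⟫), t⟫ = ⟪x, ∑ i, t i • e i⟫ := by
    simp [PiLp.inner_apply, inner_sum, real_inner_smul_right, real_inner_comm, mul_comm]
  have hnorm : ‖∑ i, t i • e i‖ = ‖t‖ := by
    rw [← sq_eq_sq₀ (norm_nonneg _) (norm_nonneg _), ← real_inner_self_eq_norm_sq,
      EuclideanSpace.real_norm_sq_eq]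
    simpa [sq] using he.inner_sum (fun i => t i) (fun i => t i) Finset.univ
  rw [charFun_apply, integral_map (by fun_prop) (by fun_prop)]
  simp_rw [hinner]
  rw [← charFun_apply, charFun_stdGaussian, charFun_stdGaussian, hnorm]

lemma map_inner_pair_stdGaussian_of_orthonormal {e : Fin 2 → E} (he : Orthonormal ℝ e) :
    (ProbabilityTheory.stdGaussian E).map (fun x => (⟪e 0, x⟫, ⟪e 1, x⟫))
      = (gaussianReal 0 1).prod (gaussianReal 0 1) := by
  have hcomp : (fun x => (⟪e 0, x⟫, ⟪e 1, x⟫))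
      = MeasurableEquiv.finTwoArrow ∘ WithLp.ofLp ∘ fun x => WithLp.toLp 2 fun i => ⟪e i, x⟫ :=
    rfl
  rw [hcomp, ← Measure.map_map (by fun_prop) (by fun_prop),
    ← Measure.map_map (by fun_prop) (by fun_prop), map_inner_stdGaussian_of_orthonormal he,
    ← map_pi_eq_stdGaussian, Measure.map_map (g := WithLp.ofLp) (by fun_prop) (by fun_prop),
    show (WithLp.ofLp ∘ WithLp.toLp 2 : (Fin 2 → ℝ) → Fin 2 → ℝ) = id from rfl, Measure.map_id]
  exact (measurePreserving_finTwoArrow (gaussianReal 0 1)).map_eq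

lemma integral_inner_pair_stdGaussian_of_orthonormal {e : Fin 2 → E} (he : Orthonormal ℝ e)
    {g : ℝ × ℝ → ℝ} (hg : AEStronglyMeasurable g ((gaussianReal 0 1).prod (gaussianReal 0 1))) :
    ∫ x, g (⟪e 0, x⟫, ⟪e 1, x⟫) ∂(ProbabilityTheory.stdGaussian E)
      = ∫ p, g p ∂((gaussianReal 0 1).prod (gaussianReal 0 1)) := by
  rw [← map_inner_pair_stdGaussian_of_orthonormal he] at hg ⊢
  exact (integral_map (by fun_prop) hg).symm

end StandardGaussian

lemma integral_exp_neg_mul_cosh (z : ℝ) : ∫ t, exp (-z * cosh t) = 2 * K0 z := by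
  rw [K0]
  simpa only [cosh_abs] using integral_comp_abs (f := fun t => exp (-z * cosh t))

lemma setIntegral_Ioi_inv_mul_eq_integral_comp_exp {r : ℝ} (hr : 0 < r) (g : ℝ → ℝ) :
    ∫ u in Set.Ioi (0 : ℝ), u⁻¹ * g u = 2⁻¹ * ∫ t, g (r * exp (t / 2)) := by
  have himage : (fun t => r * exp (t / 2)) '' Set.univ = Set.Ioi 0 := by
    ext y
    simp only [Set.image_univ, Set.mem_range, Set.mem_Ioi]
    refine ⟨fun ⟨t, ht⟩ => ht ▸ by positivity, fun hy => ⟨2 * log (y / r), ?_⟩⟩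
    rw [mul_div_cancel_left₀ _ two_ne_zero, exp_log (by positivity), mul_div_cancel₀ _ hr.ne']
  have hderiv (t : ℝ) : HasDerivAt (fun t => r * exp (t / 2)) (r / 2 * exp (t / 2)) t :=
    (((hasDerivAt_id t).div_const 2).exp.const_mul r).congr_deriv (by simp only [id]; ring)
  have hinj : Set.InjOn (fun t => r * exp (t / 2)) Set.univ := fun a _ b _ hab => by
    simpa [hr.ne'] using hab
  rw [← himage, integral_image_eq_integral_abs_deriv_smul MeasurableSet.univ
    (fun t _ => (hderiv t).hasDerivWithinAt) hinj, setIntegral_univ, ← integral_const_mul]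
  congr 1 with t
  rw [abs_of_pos (by positivity), smul_eq_mul]
  field_simp

lemma setIntegral_Ioi_inv_mul_exp_eq_K0 {α β : ℝ} (hα : 0 < α) (hβ : 0 < β) :
    ∫ u in Set.Ioi (0 : ℝ), u⁻¹ * exp (-(α * u ^ 2 + β / u ^ 2)) = K0 (2 * √(α * β)) := by
  set r := √√(β / α)
  have hr : 0 < r := by positivity
  have hαr : α * r ^ 2 = √(α * β) := by
    rw [sq_sqrt (sqrt_nonneg _), ← sqrt_sq hα.le, ← sqrt_mul (sq_nonneg α)]
    congr 1; field_simp; rw [sq_sqrt (sq_nonneg α)]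
  have hβr : β / r ^ 2 = √(α * β) := by
    rw [sq_sqrt (sqrt_nonneg _), ← sqrt_sq hβ.le, ← sqrt_div (sq_nonneg β)]
    congr 1; field_simp; rw [sq_sqrt (sq_nonneg β)]
  have hexp (t : ℝ) : -(α * (r * exp (t / 2)) ^ 2 + β / (r * exp (t / 2)) ^ 2)
      = -(2 * √(α * β)) * cosh t := by
    rw [neg_mul, neg_inj]
    have hsq : exp (t / 2) ^ 2 = exp t := by rw [← exp_nat_mul]; ring_nf
    calc α * (r * exp (t / 2)) ^ 2 + β / (r * exp (t / 2)) ^ 2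
        = α * r ^ 2 * exp t + β / r ^ 2 * (exp t)⁻¹ := by rw [mul_pow, hsq]; field_simp
      _ = 2 * √(α * β) * cosh t := by rw [hαr, hβr, cosh_eq, exp_neg]; ring
  rw [setIntegral_Ioi_inv_mul_eq_integral_comp_exp hr (fun u => exp (-(α * u ^ 2 + β / u ^ 2)))]
  simp_rw [hexp]
  rw [integral_exp_neg_mul_cosh]
  ring

lemma integral_abs_inv_mul_exp_eq_K0 {α β : ℝ} (hα : 0 < α) (hβ : 0 < β) :
    ∫ u, |u|⁻¹ * exp (-(α * u ^ 2 + β / u ^ 2)) = 2 * K0 (2 * √(α * β)) := by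
  rw [← setIntegral_Ioi_inv_mul_exp_eq_K0 hα hβ, ← integral_comp_abs]
  simp only [sq_abs]

lemma integrable_abs_inv_mul_exp {α β : ℝ} (hα : 0 < α) (hβ : 0 < β) :
    Integrable fun u : ℝ => |u|⁻¹ * exp (-(α * u ^ 2 + β / u ^ 2)) := by
  have hdom : Integrable fun u : ℝ => β⁻¹ * |u * exp (-α * u ^ 2)| :=
    (integrable_mul_exp_neg_mul_sq hα).abs.const_mul _
  refine hdom.mono' (by fun_prop) (Filter.Eventually.of_forall fun u => ?_)
  rcases eq_or_ne u 0 with rfl | hu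
  · simp
  have hle : exp (-(β / u ^ 2)) ≤ u ^ 2 / β := by
    rw [exp_neg, inv_le_comm₀ (exp_pos _) (by positivity), inv_div]
    linarith [add_one_le_exp (β / u ^ 2)]
  calc ‖|u|⁻¹ * exp (-(α * u ^ 2 + β / u ^ 2))‖
      = |u|⁻¹ * exp (-α * u ^ 2) * exp (-(β / u ^ 2)) := by
        rw [norm_of_nonneg (by positivity), mul_assoc, ← exp_add]; ring_nf
    _ ≤ |u|⁻¹ * exp (-α * u ^ 2) * (u ^ 2 / β) := by gcongr
    _ = β⁻¹ * |u * exp (-α * u ^ 2)| := by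
        rw [abs_mul, abs_of_pos (exp_pos _), ← sq_abs u]
        field_simp

lemma gaussianPDFReal_zero_one (y : ℝ) :
    gaussianPDFReal 0 1 y = (√(2 * π))⁻¹ * exp (-y ^ 2 / 2) := by
  simp [gaussianPDFReal]

lemma inv_sqrt_mul_exp_eq_abs_inv_mul_gaussianPDFReal (s y : ℝ) :
    (√(2 * π * s ^ 2))⁻¹ * exp (-y ^ 2 / (2 * s ^ 2)) = |s|⁻¹ * gaussianPDFReal 0 1 (y / s) := by
  rw [gaussianPDFReal_zero_one, sqrt_mul (by positivity), sqrt_sq_eq_abs, mul_inv, div_pow,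
    show -(y ^ 2 / s ^ 2) / 2 = -y ^ 2 / (2 * s ^ 2) by ring]
  ring

lemma integrable_gaussianReal_iff {μ : ℝ} {v : NNReal} (hv : v ≠ 0) {f : ℝ → ℝ} :
    Integrable f (gaussianReal μ v) ↔ Integrable fun x => gaussianPDFReal μ v x * f x := by
  rw [gaussianReal_of_var_ne_zero μ hv, integrable_withDensity_iff_integrable_smul'
    (measurable_gaussianPDF μ v) (Filter.Eventually.of_forall fun _ => gaussianPDF_lt_top)]
  simp only [toReal_gaussianPDF, smul_eq_mul]

lemma integrable_gaussianPDFReal_add_mul (y τ : ℝ) :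
    Integrable (fun v => gaussianPDFReal 0 1 (y + τ * v)) (gaussianReal 0 1) := by
  refine Integrable.of_bound
    ((measurable_gaussianPDFReal 0 1).comp (by fun_prop)).aestronglyMeasurable
    (√(2 * π))⁻¹ (Filter.Eventually.of_forall fun v => ?_)
  rw [norm_of_nonneg (gaussianPDFReal_nonneg _ _ _), gaussianPDFReal_zero_one]
  exact mul_le_of_le_one_right (by positivity) (exp_le_one_iff.2 (by nlinarith))

lemma integral_gaussianPDFReal_add_mul (y τ : ℝ) :
    ∫ v, gaussianPDFReal 0 1 (y + τ * v) ∂(gaussianReal 0 1)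
      = (√(2 * π * (1 + τ ^ 2)))⁻¹ * exp (-y ^ 2 / (2 * (1 + τ ^ 2))) := by
  set D := 1 + τ ^ 2
  have hD : 0 < D := by positivity
  have hpt (v : ℝ) : gaussianPDFReal 0 1 v • gaussianPDFReal 0 1 (y + τ * v)
      = ((2 * π)⁻¹ * exp (-y ^ 2 / (2 * D))) * exp (-(D / 2) * (v + y * τ / D) ^ 2) := by
    have h2π : (√(2 * π))⁻¹ * (√(2 * π))⁻¹ = (2 * π)⁻¹ := by
      rw [← mul_inv, mul_self_sqrt (by positivity)]
    calc gaussianPDFReal 0 1 v • gaussianPDFReal 0 1 (y + τ * v)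
        = (√(2 * π))⁻¹ * (√(2 * π))⁻¹ * exp (-v ^ 2 / 2 + -(y + τ * v) ^ 2 / 2) := by
          rw [smul_eq_mul, gaussianPDFReal_zero_one, gaussianPDFReal_zero_one, exp_add]; ring
      _ = _ := by
          rw [h2π, mul_assoc, ← exp_add]
          congr 2
          field_simp
          ring
  rw [integral_gaussianReal_eq_integral_smul one_ne_zero]
  simp_rw [hpt]
  rw [integral_const_mul, integral_add_right_eq_self (fun v => exp (-(D / 2) * v ^ 2)),
    integral_gaussian, show π / (D / 2) = 2 * π / D by field_simp, sqrt_div (by positivity),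
    sqrt_mul (by positivity) D]
  field_simp
  exact sq_sqrt (by positivity)

section Mixture

variable {σ a ν D : ℝ}

lemma gaussianPDFReal_mul_inv_abs_mul_exp (hσ : 0 < σ) (hD : 0 < D) (u : ℝ) :
    gaussianPDFReal 0 1 u *
        ((σ * |u|)⁻¹ * ((√(2 * π * D))⁻¹ * exp (-(ν / (σ * u) + a * u) ^ 2 / (2 * D))))
      = (2 * π * σ * √D)⁻¹ * exp (-(a * (ν / σ)) / D) *
        (|u|⁻¹ * exp (-((D + a ^ 2) / (2 * D) * u ^ 2 + ν ^ 2 / (2 * σ ^ 2 * D) / u ^ 2))) := by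
  rcases eq_or_ne u 0 with rfl | hu
  · simp
  have hexp : -u ^ 2 / 2 + -(ν / (σ * u) + a * u) ^ 2 / (2 * D)
      = -((D + a ^ 2) / (2 * D) * u ^ 2 + ν ^ 2 / (2 * σ ^ 2 * D) / u ^ 2)
        + -(a * (ν / σ)) / D := by
    field_simp
    ring
  have hsqrt : √(2 * π) * √(2 * π * D) = 2 * π * √D := by
    rw [sqrt_mul (by positivity) D, ← mul_assoc, mul_self_sqrt (by positivity)]
  calc _ = (√(2 * π) * √(2 * π * D))⁻¹ * σ⁻¹ * |u|⁻¹ *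
        exp (-u ^ 2 / 2 + -(ν / (σ * u) + a * u) ^ 2 / (2 * D)) := by
          rw [gaussianPDFReal_zero_one, exp_add]
          ring
    _ = _ := by
          rw [hexp, hsqrt, exp_add]
          ring

lemma integrable_inv_abs_mul_exp_gaussianReal (hσ : 0 < σ) (hν : ν ≠ 0) (hD : 0 < D) :
    Integrable (fun u => (σ * |u|)⁻¹ *
      ((√(2 * π * D))⁻¹ * exp (-(ν / (σ * u) + a * u) ^ 2 / (2 * D)))) (gaussianReal 0 1) := by
  rw [integrable_gaussianReal_iff one_ne_zero]
  simp_rw [gaussianPDFReal_mul_inv_abs_mul_exp hσ hD]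
  exact (integrable_abs_inv_mul_exp (by positivity) (by positivity)).const_mul _

lemma integral_inv_abs_mul_exp_gaussianReal (hσ : 0 < σ) (hν : ν ≠ 0) (hD : 0 < D) :
    ∫ u, (σ * |u|)⁻¹ * ((√(2 * π * D))⁻¹ * exp (-(ν / (σ * u) + a * u) ^ 2 / (2 * D)))
        ∂(gaussianReal 0 1)
      = (π * σ)⁻¹ * (√D)⁻¹ * exp (-(a * (ν / σ)) / D) * K0 (√(D + a ^ 2) * |ν| / (σ * D)) := by
  set α := (D + a ^ 2) / (2 * D)
  set β := ν ^ 2 / (2 * σ ^ 2 * D)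
  have hα : 0 < α := by positivity
  have hβ : 0 < β := by positivity
  have hαβ : α * β = (√(D + a ^ 2) * |ν| / (σ * D) / 2) ^ 2 := by
    simp only [α, β]
    rw [div_pow, div_pow, mul_pow, sq_sqrt (by positivity), sq_abs]
    field_simp
  rw [integral_gaussianReal_eq_integral_smul one_ne_zero]
  simp_rw [smul_eq_mul, gaussianPDFReal_mul_inv_abs_mul_exp hσ hD]
  rw [integral_const_mul, integral_abs_inv_mul_exp_eq_K0 hα hβ, hαβ, sqrt_sq (by positivity)]
  field_simp

end Mixture

theorem gaussian_density_expectation_two_dim {σ a τ ν : ℝ} (hσ : 0 < σ) (hν : ν ≠ 0) :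
    ∫ p, (√(2 * π * (σ * p.1) ^ 2))⁻¹ *
        exp (-(ν + (a * p.1 + τ * p.2) * (σ * p.1)) ^ 2 / (2 * (σ * p.1) ^ 2))
        ∂((gaussianReal 0 1).prod (gaussianReal 0 1))
      = (π * σ)⁻¹ * (√(1 + τ ^ 2))⁻¹ * exp (-(a * (ν / σ)) / (1 + τ ^ 2)) *
          K0 (√(1 + a ^ 2 + τ ^ 2) * |ν| / (σ * (1 + τ ^ 2))) := by
  set c : ℝ → ℝ := fun u => ν / (σ * u) + a * u
  set F : ℝ × ℝ → ℝ := fun p => (σ * |p.1|)⁻¹ * gaussianPDFReal 0 1 (c p.1 + τ * p.2)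
  have hF (p : ℝ × ℝ) : (√(2 * π * (σ * p.1) ^ 2))⁻¹ *
      exp (-(ν + (a * p.1 + τ * p.2) * (σ * p.1)) ^ 2 / (2 * (σ * p.1) ^ 2)) = F p := by
    rw [inv_sqrt_mul_exp_eq_abs_inv_mul_gaussianPDFReal, abs_mul, abs_of_pos hσ]
    rcases eq_or_ne p.1 0 with h | h
    · simp [F, h]
    · simp only [F, c]
      congr 3
      field_simp
      ring
  have hF_sec (u : ℝ) : ∫ v, F (u, v) ∂(gaussianReal 0 1)
      = (σ * |u|)⁻¹ * ((√(2 * π * (1 + τ ^ 2)))⁻¹ * exp (-c u ^ 2 / (2 * (1 + τ ^ 2)))) := by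
    simp only [F]
    rw [integral_const_mul, integral_gaussianPDFReal_add_mul]
  simp_rw [hF]
  rw [integral_prod_of_nonneg (f := F)
    (fun p => mul_nonneg (by positivity) (gaussianPDFReal_nonneg _ _ _))
    (by simp only [F]; fun_prop)
    (Filter.Eventually.of_forall fun u =>
      (integrable_gaussianPDFReal_add_mul (c u) τ).const_mul (σ * |u|)⁻¹)
    (by simpa only [hF_sec] using integrable_inv_abs_mul_exp_gaussianReal hσ hν (by positivity))]
  simp_rw [hF_sec]
  rw [integral_inv_abs_mul_exp_gaussianReal hσ hν (by positivity), add_right_comm]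

theorem gaussian_density_expectation_general {d : ℕ}
    (θb θbs : EuclideanSpace ℝ (Fin d)) (hθb : θb ≠ 0) (hθbs : θbs ≠ 0)
    (hpar : ¬ ∃ c : ℝ, θb = c • θbs)
    (ρ D : ℝ) (hρ : ρ = ⟪θb, θbs⟫ / (‖θb‖ * ‖θbs‖))
    (hD : D = 1 + (1 - ρ ^ 2) * ‖θbs‖ ^ 2)
    (ν : ℝ) (hν : ν ≠ 0) :
    ∫ x, (Real.sqrt (2 * π * ⟪x, θb⟫ ^ 2))⁻¹ *
        Real.exp (-(ν + ⟪x, θbs⟫ * ⟪x, θb⟫) ^ 2 / (2 * ⟪x, θb⟫ ^ 2)) ∂(stdGaussian d)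
      = (π * ‖θb‖)⁻¹ * (Real.sqrt D)⁻¹ *
          Real.exp (-(ρ * ‖θbs‖ * (ν / ‖θb‖)) / D) *
          K0 (Real.sqrt (1 + ‖θbs‖ ^ 2) * |ν| / (‖θb‖ * D)) := by
  obtain ⟨e, he, τ, hθb_eq, hθbs_eq, hnorm⟩ :=
    exists_orthonormal_pair_of_not_parallel hθb hθbs hpar
  set a := ⟪θb, θbs⟫ / ‖θb‖
  have hρa : ρ * ‖θbs‖ = a := by
    rw [hρ, div_mul_eq_mul_div, mul_div_mul_right _ _ (norm_ne_zero_iff.2 hθbs)]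
  have hD_eq : D = 1 + τ ^ 2 := by
    rw [hD]
    linear_combination hnorm - (ρ * ‖θbs‖ + a) * hρa
  have hθb_inner (x : EuclideanSpace ℝ (Fin d)) : ⟪x, θb⟫ = ‖θb‖ * ⟪e 0, x⟫ := by
    rw [congrArg (inner ℝ x) hθb_eq, real_inner_smul_right, real_inner_comm]
  have hθbs_inner (x : EuclideanSpace ℝ (Fin d)) :
      ⟪x, θbs⟫ = a * ⟪e 0, x⟫ + τ * ⟪e 1, x⟫ := by
    rw [hθbs_eq, inner_add_right, real_inner_smul_right, real_inner_smul_right,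
      real_inner_comm, real_inner_comm (e 1)]
  simp_rw [hθb_inner, hθbs_inner]
  rw [stdGaussian_eq_stdGaussian_euclideanSpace, integral_inner_pair_stdGaussian_of_orthonormal he
    (g := fun p => (√(2 * π * (‖θb‖ * p.1) ^ 2))⁻¹ *
      exp (-(ν + (a * p.1 + τ * p.2) * (‖θb‖ * p.1)) ^ 2 / (2 * (‖θb‖ * p.1) ^ 2))) (by fun_prop),
    gaussian_density_expectation_two_dim (norm_pos_iff.2 hθb) hν, hD_eq, hρa, hnorm,
    add_assoc]

/-- For a standard Gaussian vector `x` in `ℝ^d` (`d ≥ 2`) and nonzero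
non-parallel `θ̄, θ̄*`, with `ρ` the cosine of their angle and
`D = 1 + (1-ρ²)‖θ̄*‖²`, for every `ν ≠ 0` the expectation of the density of
`N(-⟪x,θ̄*⟫⟪x,θ̄⟫, ⟪x,θ̄⟫²)` at `ν` equals
`(π‖θ̄‖)⁻¹ D^{-1/2} exp(-ρ‖θ̄*‖(ν/‖θ̄‖)/D) K₀(√(1+‖θ̄*‖²)|ν|/(‖θ̄‖ D))`. -/
theorem gaussian_density_expectation {d : ℕ} (hd : 2 ≤ d)
    (θb θbs : EuclideanSpace ℝ (Fin d)) (hθb : θb ≠ 0) (hθbs : θbs ≠ 0)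
    (hpar : ¬ ∃ c : ℝ, θb = c • θbs)
    (ρ D : ℝ) (hρ : ρ = ⟪θb, θbs⟫ / (‖θb‖ * ‖θbs‖))
    (hD : D = 1 + (1 - ρ ^ 2) * ‖θbs‖ ^ 2)
    (ν : ℝ) (hν : ν ≠ 0) :
    ∫ x, (Real.sqrt (2 * π * ⟪x, θb⟫ ^ 2))⁻¹ *
        Real.exp (-(ν + ⟪x, θbs⟫ * ⟪x, θb⟫) ^ 2 / (2 * ⟪x, θb⟫ ^ 2)) ∂(stdGaussian d)
      = (π * ‖θb‖)⁻¹ * (Real.sqrt D)⁻¹ *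
          Real.exp (-(ρ * ‖θbs‖ * (ν / ‖θb‖)) / D) *
          K0 (Real.sqrt (1 + ‖θbs‖ ^ 2) * |ν| / (‖θb‖ * D)) :=
  gaussian_density_expectation_general θb θbs hθb hθbs hpar ρ D hρ hD ν hν
end

section
/- For every a with 0 ≤ a < 1, ∫₀^∞ sinh(a·x)·K₀(x) dx = arcsin(a)/√(1−a²); equivalently, (2√(1−a²)/π)·∫₀^∞ sinh(a·x)·K₀(x) dx = 1 − (2/π)·arccos(a). -/
open Real

/-!
Writing `K₀ x = ∫₀^∞ exp (-x cosh t) dt` and exchanging the two integrals (the integrand is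
nonnegative, so Tonelli applies), the inner integral is the Laplace transform of `sinh (a x)` at
`cosh t`, namely `a / (cosh² t - a²)`. With `s = √(1 - a²)` this has the antiderivative
`arctan (a tanh t / s) / s`, which tends to `arctan (a / s) / s = arcsin a / s` as `t → ∞`.
-/

open MeasureTheory Set Filter Topology

namespace Real

theorem hasDerivAt_tanh (t : ℝ) : HasDerivAt tanh (1 / cosh t ^ 2) t := by
  have h := (hasDerivAt_sinh t).div (hasDerivAt_cosh t) (cosh_pos t).ne'
  rw [← sq, ← sq, cosh_sq_sub_sinh_sq] at h
  rwa [show tanh = sinh / cosh from funext fun _ => tanh_eq_sinh_div_cosh _]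

theorem tendsto_tanh_atTop : Tendsto tanh atTop (𝓝 1) := by
  have he : Tendsto (fun t : ℝ => exp (-t) ^ 2) atTop (𝓝 0) := by
    simpa using (tendsto_exp_neg_atTop_nhds_zero.pow 2)
  have h : Tendsto (fun t : ℝ => (1 - exp (-t) ^ 2) / (1 + exp (-t) ^ 2)) atTop
      (𝓝 ((1 - 0) / (1 + 0))) :=
    (tendsto_const_nhds.sub he).div (tendsto_const_nhds.add he) (by norm_num)
  norm_num at h
  refine h.congr fun t => ?_
  rw [tanh_eq_sinh_div_cosh, sinh_eq, cosh_eq, exp_neg]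
  field_simp

end Real

theorem sinh_mul_mul_exp_neg_mul (a c x : ℝ) :
    sinh (a * x) * exp (-x * c) = (exp ((a - c) * x) - exp ((-a - c) * x)) / 2 := by
  rw [sinh_eq, sub_div, sub_mul, div_mul_eq_mul_div, div_mul_eq_mul_div, ← exp_add, ← exp_add]
  ring_nf

theorem integrableOn_sinh_mul_mul_exp_neg_mul {a c : ℝ} (h : |a| < c) :
    IntegrableOn (fun x => sinh (a * x) * exp (-x * c)) (Ioi 0) := by
  obtain ⟨h₁, h₂⟩ := abs_lt.1 h
  simp_rw [sinh_mul_mul_exp_neg_mul]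
  exact ((integrableOn_exp_mul_Ioi (by linarith) 0).sub
    (integrableOn_exp_mul_Ioi (by linarith) 0)).div_const 2

theorem integral_sinh_mul_mul_exp_neg_mul {a c : ℝ} (h : |a| < c) :
    ∫ x in Ioi 0, sinh (a * x) * exp (-x * c) = a / (c ^ 2 - a ^ 2) := by
  obtain ⟨h₁, h₂⟩ := abs_lt.1 h
  simp_rw [sinh_mul_mul_exp_neg_mul]
  rw [integral_div, integral_sub (integrableOn_exp_mul_Ioi (by linarith) 0)
    (integrableOn_exp_mul_Ioi (by linarith) 0), integral_exp_mul_Ioi (by linarith),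
    integral_exp_mul_Ioi (by linarith)]
  have : a - c ≠ 0 := by linarith
  have : -a - c ≠ 0 := by linarith
  have : c ^ 2 - a ^ 2 ≠ 0 := by nlinarith
  simp only [mul_zero, exp_zero]
  field_simp
  ring

theorem tendsto_arctan_mul_tanh_atTop (k : ℝ) :
    Tendsto (fun t => arctan (k * tanh t)) atTop (𝓝 (arctan k)) := by
  have h := tendsto_tanh_atTop.const_mul k
  rw [mul_one] at h
  exact (continuous_arctan.tendsto k).comp h

theorem hasDerivAt_arctan_mul_tanh_div {a : ℝ} (ha : |a| < 1) (t : ℝ) :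
    HasDerivAt (fun t => arctan (a / √(1 - a ^ 2) * tanh t) / √(1 - a ^ 2))
      (a / (cosh t ^ 2 - a ^ 2)) t := by
  have hs : 0 < 1 - a ^ 2 := by nlinarith [abs_nonneg a, sq_abs a]
  refine (((hasDerivAt_tanh t).const_mul _).arctan.div_const _).congr_deriv ?_
  have hsq := sq_sqrt hs.le
  have hc := cosh_sq_sub_sinh_sq t
  have : cosh t ^ 2 - a ^ 2 ≠ 0 := by nlinarith [one_le_cosh t]
  rw [tanh_eq_sinh_div_cosh]
  field_simp
  rw [hsq]
  linear_combination a ^ 3 * hc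

theorem integrableOn_div_cosh_sq_sub_sq {a : ℝ} (ha : 0 ≤ a) (ha1 : a < 1) :
    IntegrableOn (fun t => a / (cosh t ^ 2 - a ^ 2)) (Ioi 0) :=
  integrableOn_Ioi_deriv_of_nonneg'
    (fun t _ => hasDerivAt_arctan_mul_tanh_div (abs_lt.2 ⟨by linarith, ha1⟩) t)
    (fun t _ => div_nonneg ha (by nlinarith [one_le_cosh t]))
    ((tendsto_arctan_mul_tanh_atTop _).div_const _)

theorem integral_div_cosh_sq_sub_sq {a : ℝ} (ha : 0 ≤ a) (ha1 : a < 1) :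
    ∫ t in Ioi 0, a / (cosh t ^ 2 - a ^ 2) = arcsin a / √(1 - a ^ 2) := by
  rw [integral_Ioi_of_hasDerivAt_of_tendsto'
    (fun t _ => hasDerivAt_arctan_mul_tanh_div (abs_lt.2 ⟨by linarith, ha1⟩) t)
    (integrableOn_div_cosh_sq_sub_sq ha ha1) ((tendsto_arctan_mul_tanh_atTop _).div_const _),
    arcsin_eq_arctan ⟨by linarith, ha1⟩]
  simp

theorem integrable_sinh_mul_mul_exp_neg_mul_cosh {a : ℝ} (ha : 0 ≤ a) (ha1 : a < 1) :
    Integrable (Function.uncurry fun x t => sinh (a * x) * exp (-x * cosh t))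
      ((volume.restrict (Ioi 0)).prod (volume.restrict (Ioi 0))) := by
  have hlt (t : ℝ) : |a| < cosh t := ((abs_of_nonneg ha).trans_lt ha1).trans_le (one_le_cosh t)
  have hcont : Continuous (Function.uncurry fun x t => sinh (a * x) * exp (-x * cosh t)) := by
    fun_prop
  refine (integrable_prod_iff' hcont.aestronglyMeasurable).2
    ⟨.of_forall fun t => integrableOn_sinh_mul_mul_exp_neg_mul (hlt t), ?_⟩
  refine (integrableOn_div_cosh_sq_sub_sq ha ha1).congr (.of_forall fun t => ?_)
  simp only [Function.uncurry_apply_pair]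
  rw [← integral_sinh_mul_mul_exp_neg_mul (hlt t)]
  refine setIntegral_congr_fun measurableSet_Ioi fun x hx => (norm_of_nonneg ?_).symm
  exact mul_nonneg (sinh_nonneg_iff.2 (mul_nonneg ha (le_of_lt hx))) (exp_pos _).le

theorem integral_sinh_mul_mul_K0 {a : ℝ} (ha : 0 ≤ a) (ha1 : a < 1) :
    ∫ x in Ioi 0, sinh (a * x) * K0 x = ∫ t in Ioi 0, a / (cosh t ^ 2 - a ^ 2) := calc
  _ = ∫ x in Ioi 0, ∫ t in Ioi 0, sinh (a * x) * exp (-x * cosh t) := by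
    simp only [K0, integral_const_mul]
  _ = ∫ t in Ioi 0, ∫ x in Ioi 0, sinh (a * x) * exp (-x * cosh t) :=
    integral_integral_swap (integrable_sinh_mul_mul_exp_neg_mul_cosh ha ha1)
  _ = _ := setIntegral_congr_fun measurableSet_Ioi fun t _ =>
    integral_sinh_mul_mul_exp_neg_mul
      (((abs_of_nonneg ha).trans_lt ha1).trans_le (one_le_cosh t))

/-- For `0 ≤ a < 1`, `∫₀^∞ sinh(a x) K₀(x) dx = arcsin a / √(1-a²)`;
equivalently `(2√(1-a²)/π) ∫₀^∞ sinh(a x) K₀(x) dx = 1 - (2/π) arccos a`. -/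
theorem integral_sinh_K0 (a : ℝ) (ha : 0 ≤ a) (ha1 : a < 1) :
    (∫ x in Set.Ioi (0 : ℝ), Real.sinh (a * x) * K0 x)
        = Real.arcsin a / Real.sqrt (1 - a ^ 2) ∧
    (2 * Real.sqrt (1 - a ^ 2) / π) * ∫ x in Set.Ioi (0 : ℝ), Real.sinh (a * x) * K0 x
        = 1 - (2 / π) * Real.arccos a := by
  have h := (integral_sinh_mul_mul_K0 ha ha1).trans (integral_div_cosh_sq_sub_sq ha ha1)
  refine ⟨h, ?_⟩
  have hs : 0 < √(1 - a ^ 2) := sqrt_pos.2 (by nlinarith)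
  rw [h, arccos_eq_pi_div_two_sub_arcsin]
  field_simp
  ring
end

section
/- (No-separation EM update bounds.) For β ≥ 0 and ν ∈ ℝ define T(ν, β) := (1/π)·∫_ℝ tanh(ν − β·x)·K₀(|x|) dx and S(ν, β) := (1/π)·∫_ℝ tanh(β·x − ν)·x·K₀(|x|) dx. Then: (i) |T(ν, β)| ≤ |tanh ν| and T(ν, β) has the same sign as ν (in particular, if tanh ν′ = T(ν, β) then |ν′| ≤ |ν| and sgn ν′ = sgn ν); (ii) 0 ≤ S(ν, β) ≤ 2/π, with S(ν, β) > 0 whenever β > 0. -/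
/-!
Pairing `x` with `-x` replaces both integrands by their even parts. The identity
`tanh (s - u) + tanh (s + u) = sinh (2 s) / (cosh s ^ 2 + sinh u ^ 2)` shows that this sum has the
sign of `s` and modulus at most `2 |tanh s|`. Hence `π T` is an integral against the weight
`K₀(|x|)` of a function with the sign of `ν` and modulus at most `|tanh ν|`, and the even part of
the integrand of `S` is nonnegative, positive off `x = 0` when `β > 0`. The weight has
`∫ K₀(|x|) dx = π` and `∫ |x| K₀(|x|) dx = 2`: by Fubini, `∫₀^∞ x ^ (a - 1) K₀(x) dx` equals
`Γ(a) ∫₀^∞ sech ^ a`, and `∫₀^∞ sech = π / 2`, `∫₀^∞ sech ^ 2 = 1`.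
-/

open Real

open MeasureTheory Set Filter Topology

namespace Real

theorem tanh_strictMono : StrictMono tanh := fun a b hab => by
  rwa [← artanh_lt_artanh_iff ⟨neg_one_lt_tanh a, tanh_lt_one a⟩
    ⟨neg_one_lt_tanh b, tanh_lt_one b⟩, artanh_tanh, artanh_tanh]

theorem tanh_pos_iff {x : ℝ} : 0 < tanh x ↔ 0 < x := by
  simpa only [tanh_zero] using tanh_strictMono.lt_iff_lt (a := 0)

theorem tanh_neg_iff {x : ℝ} : tanh x < 0 ↔ x < 0 := by
  simpa only [tanh_zero] using tanh_strictMono.lt_iff_lt (b := 0)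

theorem abs_tanh (x : ℝ) : |tanh x| = tanh |x| := by
  rcases le_or_gt 0 x with hx | hx
  · rw [abs_of_nonneg hx, abs_of_nonneg]
    simpa only [tanh_zero] using tanh_strictMono.monotone hx
  · rw [abs_of_neg hx, abs_of_neg (tanh_neg_iff.2 hx), tanh_neg]

theorem sign_tanh (x : ℝ) : sign (tanh x) = sign x := by
  rcases lt_trichotomy x 0 with hx | rfl | hx
  · rw [sign_of_neg hx, sign_of_neg (tanh_neg_iff.2 hx)]
  · rw [tanh_zero]
  · rw [sign_of_pos hx, sign_of_pos (tanh_pos_iff.2 hx)]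

theorem abs_le_abs_of_abs_tanh_le {a b : ℝ} (h : |tanh a| ≤ |tanh b|) : |a| ≤ |b| := by
  rwa [abs_tanh, abs_tanh, tanh_strictMono.le_iff_le] at h

@[fun_prop]
theorem continuous_tanh : Continuous tanh :=
  (continuous_sinh.div continuous_cosh fun x => (cosh_pos x).ne').congr fun x =>
    (tanh_eq_sinh_div_cosh x).symm

theorem tanh_add_tanh (a b : ℝ) : tanh a + tanh b = sinh (a + b) / (cosh a * cosh b) := by
  rw [tanh_eq_sinh_div_cosh, tanh_eq_sinh_div_cosh,
    div_add_div _ _ (cosh_pos a).ne' (cosh_pos b).ne', sinh_add]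

theorem cosh_sub_mul_cosh_add (s u : ℝ) :
    cosh (s - u) * cosh (s + u) = cosh s ^ 2 + sinh u ^ 2 := by
  rw [cosh_sub, cosh_add]
  linear_combination (cosh u ^ 2 - 1) * cosh_sq s + (sinh s ^ 2 + 1) * cosh_sq u

theorem abs_tanh_sub_add_tanh_add_le (s u : ℝ) :
    |tanh (s - u) + tanh (s + u)| ≤ 2 * |tanh s| := by
  have hc := cosh_pos s
  rw [tanh_add_tanh, sub_add_add_cancel, ← two_mul, sinh_two_mul, cosh_sub_mul_cosh_add,
    tanh_eq_sinh_div_cosh, abs_div, abs_div, abs_of_pos hc,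
    abs_of_pos (add_pos_of_pos_of_nonneg (pow_pos hc 2) (sq_nonneg (sinh u))), abs_mul,
    abs_mul, abs_two, abs_of_pos hc]
  calc 2 * |sinh s| * cosh s / (cosh s ^ 2 + sinh u ^ 2)
      ≤ 2 * |sinh s| * cosh s / cosh s ^ 2 := by gcongr; nlinarith
    _ = 2 * (|sinh s| / cosh s) := by field_simp

theorem mul_tanh_sub_add_tanh_add_pos {s : ℝ} (hs : s ≠ 0) (u : ℝ) :
    0 < s * (tanh (s - u) + tanh (s + u)) := by
  rw [tanh_add_tanh, sub_add_add_cancel, ← two_mul, mul_div_assoc']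
  refine div_pos ?_ (mul_pos (cosh_pos _) (cosh_pos _))
  rcases hs.lt_or_gt with hs | hs
  · exact mul_pos_of_neg_of_neg hs (sinh_neg_iff.2 (by linarith))
  · exact mul_pos hs (sinh_pos_iff.2 (by linarith))

theorem mul_tanh_mul_sub_add_tanh_mul_add_pos {β x : ℝ} (hβ : 0 < β) (hx : x ≠ 0) (ν : ℝ) :
    0 < x * (tanh (β * x - ν) + tanh (β * x + ν)) := by
  refine pos_of_mul_pos_right ?_ hβ.le
  simpa only [mul_assoc] using mul_tanh_sub_add_tanh_add_pos (mul_ne_zero hβ.ne' hx) ν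

theorem mul_tanh_mul_sub_add_tanh_mul_add_nonneg {β : ℝ} (hβ : 0 ≤ β) (x ν : ℝ) :
    0 ≤ x * (tanh (β * x - ν) + tanh (β * x + ν)) := by
  rcases hβ.eq_or_lt with rfl | hβ
  · simp [tanh_neg]
  rcases eq_or_ne x 0 with rfl | hx
  · simp
  exact (mul_tanh_mul_sub_add_tanh_mul_add_pos hβ hx ν).le

end Real

theorem K0_nonneg (z : ℝ) : 0 ≤ K0 z :=
  integral_nonneg fun _ => (exp_pos _).le

theorem integrableOn_exp_neg_mul_cosh {z : ℝ} (hz : 0 < z) :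
    IntegrableOn (fun t => exp (-z * cosh t)) (Ioi 0) := by
  refine (exp_neg_integrableOn_Ioi 0 hz).mono' (by fun_prop) ?_
  filter_upwards [ae_restrict_mem measurableSet_Ioi] with t (ht : 0 < t)
  rw [norm_of_nonneg (exp_pos _).le, exp_le_exp, neg_mul, neg_mul, neg_le_neg_iff]
  exact mul_le_mul_of_nonneg_left ((self_le_sinh_iff.2 ht.le).trans (sinh_lt_cosh t).le) hz.le

-- `K0 0 = 0`: the defining integral diverges and the Bochner integral returns its junk value.
theorem K0_pos {z : ℝ} (hz : 0 < z) : 0 < K0 z := by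
  rw [K0, integral_pos_iff_support_of_nonneg (fun _ => (exp_pos _).le)
    (integrableOn_exp_neg_mul_cosh hz)]
  simp [Function.support, (exp_pos _).ne']

@[fun_prop]
theorem measurable_K0 : Measurable K0 :=
  (Continuous.stronglyMeasurable (f := Function.uncurry fun z t : ℝ => exp (-z * cosh t))
    (by fun_prop)).integral_prod_right.measurable

theorem integrableOn_rpow_mul_exp_neg_mul {a r : ℝ} (ha : 0 < a) (hr : 0 < r) :
    IntegrableOn (fun x => x ^ (a - 1) * exp (-(r * x))) (Ioi 0) := by
  simpa [neg_mul] using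
    integrableOn_rpow_mul_exp_neg_mul_rpow (p := 1) (by linarith : -1 < a - 1) one_pos hr

theorem one_div_cosh_rpow_le (a : ℝ) (ha : 0 ≤ a) (t : ℝ) :
    (1 / cosh t) ^ a ≤ 2 ^ a * exp (-(a * t)) := by
  have hcosh : 1 / cosh t ≤ 2 * exp (-t) := by
    rw [div_le_iff₀ (cosh_pos t), cosh_eq, exp_neg]
    field_simp
    nlinarith [exp_pos t, exp_pos (-t)]
  calc (1 / cosh t) ^ a ≤ (2 * exp (-t)) ^ a := by gcongr
    _ = 2 ^ a * exp (-(a * t)) := by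
      rw [mul_rpow zero_le_two (exp_pos _).le, ← exp_mul]; ring_nf

theorem integrableOn_one_div_cosh_rpow {a : ℝ} (ha : 0 < a) :
    IntegrableOn (fun t => (1 / cosh t) ^ a) (Ioi 0) := by
  refine ((exp_neg_integrableOn_Ioi 0 ha).const_mul (2 ^ a)).mono'
    (by fun_prop : Measurable fun t => (1 / cosh t) ^ a).aestronglyMeasurable
    (Eventually.of_forall fun t => ?_)
  rw [norm_of_nonneg (by positivity)]
  simpa [neg_mul] using one_div_cosh_rpow_le a ha.le t

theorem integral_rpow_mul_exp_neg_mul_cosh {a : ℝ} (ha : 0 < a) (t : ℝ) :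
    ∫ x in Ioi 0, x ^ (a - 1) * exp (-x * cosh t) = Gamma a * (1 / cosh t) ^ a := by
  simp_rw [neg_mul, mul_comm _ (cosh t), mul_comm (Gamma a)]
  exact integral_rpow_mul_exp_neg_mul_Ioi ha (cosh_pos t)

theorem integrable_rpow_mul_exp_neg_mul_cosh {a : ℝ} (ha : 0 < a) :
    Integrable (fun p : ℝ × ℝ => p.1 ^ (a - 1) * exp (-p.1 * cosh p.2))
      ((volume.restrict (Ioi 0)).prod (volume.restrict (Ioi 0))) := by
  rw [integrable_prod_iff' (by fun_prop : Measurable fun p : ℝ × ℝ =>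
    p.1 ^ (a - 1) * exp (-p.1 * cosh p.2)).aestronglyMeasurable]
  refine ⟨Eventually.of_forall fun t => ?_, ?_⟩
  · simpa only [IntegrableOn, neg_mul, mul_comm (cosh t)] using
      integrableOn_rpow_mul_exp_neg_mul ha (cosh_pos t)
  · refine ((integrableOn_one_div_cosh_rpow ha).const_mul (Gamma a)).congr ?_
    filter_upwards with t
    rw [← integral_rpow_mul_exp_neg_mul_cosh ha t]
    refine setIntegral_congr_fun measurableSet_Ioi fun x (hx : 0 < x) => ?_
    exact (norm_of_nonneg (by positivity)).symm

theorem integrableOn_rpow_mul_K0 {a : ℝ} (ha : 0 < a) :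
    IntegrableOn (fun x => x ^ (a - 1) * K0 x) (Ioi 0) := by
  refine (integrable_rpow_mul_exp_neg_mul_cosh ha).integral_prod_left.congr ?_
  filter_upwards with x
  exact integral_const_mul _ _

theorem integral_rpow_mul_K0 {a : ℝ} (ha : 0 < a) :
    ∫ x in Ioi 0, x ^ (a - 1) * K0 x = Gamma a * ∫ t in Ioi 0, (1 / cosh t) ^ a := by
  simp_rw [K0, ← integral_const_mul]
  rw [integral_integral_swap (integrable_rpow_mul_exp_neg_mul_cosh ha)]
  simp_rw [integral_rpow_mul_exp_neg_mul_cosh ha]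

theorem integral_inv_cosh : ∫ t in Ioi 0, (cosh t)⁻¹ = π / 2 := by
  have hderiv (t : ℝ) (_ : t ∈ Ici 0) : HasDerivAt (fun t => arctan (sinh t)) (cosh t)⁻¹ t := by
    refine ((hasDerivAt_arctan _).comp t (hasDerivAt_sinh t)).congr_deriv ?_
    rw [← cosh_sq', sq]
    field_simp [(cosh_pos t).ne']
  have hlim : Tendsto (fun t => arctan (sinh t)) atTop (𝓝 (π / 2)) :=
    (tendsto_nhds_of_tendsto_nhdsWithin tendsto_arctan_atTop).comp <|
      tendsto_atTop_mono' atTop ((eventually_ge_atTop 0).mono fun _ => self_le_sinh_iff.2)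
        tendsto_id
  simpa using integral_Ioi_of_hasDerivAt_of_tendsto' hderiv
    (by simpa using integrableOn_one_div_cosh_rpow one_pos) hlim

theorem integral_inv_cosh_sq : ∫ t in Ioi 0, (cosh t ^ 2)⁻¹ = 1 := by
  have hderiv (t : ℝ) (_ : t ∈ Ici 0) : HasDerivAt tanh (cosh t ^ 2)⁻¹ t := by
    have hsc := ((hasDerivAt_sinh t).div (hasDerivAt_cosh t) (cosh_pos t).ne')
    refine (hsc.congr_of_eventuallyEq (Eventually.of_forall tanh_eq_sinh_div_cosh)).congr_deriv ?_
    rw [← sq, ← sq, cosh_sq]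
    ring
  simpa using integral_Ioi_of_hasDerivAt_of_tendsto' hderiv
    (by simpa using integrableOn_one_div_cosh_rpow two_pos) tendsto_tanh_atTop

theorem integrableOn_K0 : IntegrableOn K0 (Ioi 0) := by
  simpa using integrableOn_rpow_mul_K0 one_pos

theorem integral_K0 : ∫ x in Ioi 0, K0 x = π / 2 := by
  simpa [integral_inv_cosh] using integral_rpow_mul_K0 one_pos

theorem integrableOn_mul_K0 : IntegrableOn (fun x => x * K0 x) (Ioi 0) := by
  simpa [show (2 : ℝ) - 1 = 1 by norm_num] using integrableOn_rpow_mul_K0 two_pos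

theorem integral_mul_K0 : ∫ x in Ioi 0, x * K0 x = 1 := by
  simpa [show (2 : ℝ) - 1 = 1 by norm_num, integral_inv_cosh_sq] using integral_rpow_mul_K0 two_pos

theorem integrable_comp_abs {E : Type*} [NormedAddCommGroup E] {f : ℝ → E}
    (hf : IntegrableOn f (Ioi 0)) : Integrable fun x => f |x| := by
  have hpos : IntegrableOn (fun x => f |x|) (Ioi 0) :=
    hf.congr_fun (fun x (hx : 0 < x) => by rw [abs_of_pos hx]) measurableSet_Ioi
  have hneg : IntegrableOn (fun x => f |x|) (Iic 0) := by
    rw [← Measure.map_neg_eq_self (volume : Measure ℝ),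
      measurableEmbedding_neg.integrableOn_map_iff]
    simp_rw [Function.comp_def, abs_neg, neg_preimage, neg_Iic, neg_zero]
    exact Iff.mpr integrableOn_Ici_iff_integrableOn_Ioi hpos
  simpa using hneg.union hpos

theorem integral_eq_integral_half_add_comp_neg {g : ℝ → ℝ} (hg : Integrable g) :
    ∫ x, g x = ∫ x, (g x + g (-x)) / 2 := by
  rw [integral_div, integral_add hg hg.comp_neg, integral_neg_eq_self]
  ring

theorem integral_pos_of_nonneg_of_pos_of_ne_zero {f : ℝ → ℝ} (hf : Integrable f)
    (hnonneg : 0 ≤ f) (hpos : ∀ x ≠ 0, 0 < f x) : 0 < ∫ x, f x := by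
  rw [integral_pos_iff_support_of_nonneg hnonneg hf]
  calc (0 : ENNReal) < volume (Ioi (0 : ℝ)) := by simp
    _ ≤ volume (Function.support f) :=
      measure_mono fun x (hx : 0 < x) => (hpos x hx.ne').ne'

theorem integrable_K0_abs : Integrable fun x => K0 |x| :=
  integrable_comp_abs integrableOn_K0

theorem integral_K0_abs : ∫ x, K0 |x| = π := by
  rw [integral_comp_abs, integral_K0]
  ring

theorem integrable_abs_mul_K0_abs : Integrable fun x => |x| * K0 |x| :=
  integrable_comp_abs integrableOn_mul_K0

theorem integral_abs_mul_K0_abs : ∫ x, |x| * K0 |x| = 2 := by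
  rw [integral_comp_abs (f := fun x => x * K0 x), integral_mul_K0, mul_one]

namespace NoSeparationEM

noncomputable def T (ν β : ℝ) : ℝ := (1 / π) * ∫ x, tanh (ν - β * x) * K0 |x|

noncomputable def S (ν β : ℝ) : ℝ := (1 / π) * ∫ x, tanh (β * x - ν) * x * K0 |x|

variable (ν β : ℝ)

theorem integrable_tanh_sub_mul_mul_K0_abs : Integrable fun x => tanh (ν - β * x) * K0 |x| :=
  integrable_K0_abs.bdd_mul (c := 1)
    (by fun_prop : Continuous fun x => tanh (ν - β * x)).aestronglyMeasurable
    (Eventually.of_forall fun _ => (abs_tanh_lt_one _).le)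

theorem tanh_sub_mul_mul_K0_abs_evenPart (x : ℝ) :
    (tanh (ν - β * x) * K0 |x| + tanh (ν - β * -x) * K0 |-x|) / 2
      = (tanh (ν - β * x) + tanh (ν + β * x)) / 2 * K0 |x| := by
  rw [abs_neg, mul_neg, sub_neg_eq_add]
  ring

theorem T_eq : T ν β = (1 / π) * ∫ x, (tanh (ν - β * x) + tanh (ν + β * x)) / 2 * K0 |x| := by
  rw [T, integral_eq_integral_half_add_comp_neg (integrable_tanh_sub_mul_mul_K0_abs ν β)]
  simp_rw [tanh_sub_mul_mul_K0_abs_evenPart]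

theorem integrable_T_evenPart :
    Integrable fun x => (tanh (ν - β * x) + tanh (ν + β * x)) / 2 * K0 |x| := by
  have hg := integrable_tanh_sub_mul_mul_K0_abs ν β
  simpa only [Pi.add_apply, tanh_sub_mul_mul_K0_abs_evenPart] using
    (hg.add hg.comp_neg).div_const 2

theorem abs_T_le : |T ν β| ≤ |tanh ν| := by
  have hbound : ‖∫ x, (tanh (ν - β * x) + tanh (ν + β * x)) / 2 * K0 |x|‖
      ≤ ∫ x, |tanh ν| * K0 |x| := by
    refine norm_integral_le_of_norm_le (integrable_K0_abs.const_mul _)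
      (Eventually.of_forall fun x => ?_)
    rw [norm_mul, norm_div, norm_of_nonneg (K0_nonneg _), Real.norm_two, Real.norm_eq_abs]
    refine mul_le_mul_of_nonneg_right ?_ (K0_nonneg _)
    linarith [abs_tanh_sub_add_tanh_add_le ν (β * x)]
  rw [integral_const_mul, integral_K0_abs, Real.norm_eq_abs] at hbound
  rw [T_eq, abs_mul, abs_of_pos (one_div_pos.2 pi_pos)]
  calc _ ≤ 1 / π * (|tanh ν| * π) := by gcongr
    _ = |tanh ν| := by field_simp

theorem T_pos {ν : ℝ} (hν : 0 < ν) (β : ℝ) : 0 < T ν β := by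
  have hsum (x : ℝ) : 0 < tanh (ν - β * x) + tanh (ν + β * x) :=
    pos_of_mul_pos_right (mul_tanh_sub_add_tanh_add_pos hν.ne' (β * x)) hν.le
  rw [T_eq]
  refine mul_pos (one_div_pos.2 pi_pos) (integral_pos_of_nonneg_of_pos_of_ne_zero
    (integrable_T_evenPart ν β) (fun x => ?_) fun x hx => ?_)
  · exact mul_nonneg (half_pos (hsum x)).le (K0_nonneg _)
  · exact mul_pos (half_pos (hsum x)) (K0_pos (abs_pos.2 hx))

theorem T_neg_left : T (-ν) β = -T ν β := by
  have harg (x : ℝ) : -ν - β * -x = -(ν - β * x) := by ring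
  rw [T, T, ← integral_neg_eq_self]
  simp_rw [harg, tanh_neg, abs_neg, neg_mul, integral_neg, mul_neg]

theorem sign_T : sign (T ν β) = sign ν := by
  rcases lt_trichotomy ν 0 with hν | rfl | hν
  · rw [← neg_neg ν, T_neg_left, sign_neg, sign_neg, sign_of_pos (T_pos (neg_pos.2 hν) β),
      sign_of_pos (neg_pos.2 hν)]
  · have h := T_neg_left 0 β
    rw [neg_zero, eq_neg_iff_add_eq_zero, ← two_mul, mul_eq_zero] at h
    rw [h.resolve_left two_ne_zero]
  · rw [sign_of_pos (T_pos hν β), sign_of_pos hν]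

theorem integrable_tanh_mul_sub_mul_mul_K0_abs :
    Integrable fun x => tanh (β * x - ν) * x * K0 |x| := by
  have hxK : Integrable fun x => x * K0 |x| :=
    integrable_abs_mul_K0_abs.mono'
      (by fun_prop : Measurable fun x => x * K0 |x|).aestronglyMeasurable
      (Eventually.of_forall fun x => by
        rw [norm_mul, norm_of_nonneg (K0_nonneg _), Real.norm_eq_abs])
  simpa only [mul_assoc] using hxK.bdd_mul (c := 1)
    (by fun_prop : Continuous fun x => tanh (β * x - ν)).aestronglyMeasurable
    (Eventually.of_forall fun _ => (abs_tanh_lt_one _).le)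

theorem tanh_mul_sub_mul_mul_K0_abs_evenPart (x : ℝ) :
    (tanh (β * x - ν) * x * K0 |x| + tanh (β * -x - ν) * -x * K0 |-x|) / 2
      = x * (tanh (β * x - ν) + tanh (β * x + ν)) / 2 * K0 |x| := by
  have harg : β * -x - ν = -(β * x + ν) := by ring
  rw [abs_neg, harg, tanh_neg]
  ring

theorem S_eq :
    S ν β = (1 / π) * ∫ x, x * (tanh (β * x - ν) + tanh (β * x + ν)) / 2 * K0 |x| := by
  rw [S, integral_eq_integral_half_add_comp_neg (integrable_tanh_mul_sub_mul_mul_K0_abs ν β)]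
  simp_rw [tanh_mul_sub_mul_mul_K0_abs_evenPart]

theorem integrable_S_evenPart :
    Integrable fun x => x * (tanh (β * x - ν) + tanh (β * x + ν)) / 2 * K0 |x| := by
  have hg := integrable_tanh_mul_sub_mul_mul_K0_abs ν β
  simpa only [Pi.add_apply, tanh_mul_sub_mul_mul_K0_abs_evenPart] using
    (hg.add hg.comp_neg).div_const 2

theorem S_nonneg {β : ℝ} (hβ : 0 ≤ β) : 0 ≤ S ν β := by
  rw [S_eq]
  refine mul_nonneg (one_div_pos.2 pi_pos).le (integral_nonneg fun x => ?_)
  exact mul_nonneg (div_nonneg (mul_tanh_mul_sub_add_tanh_mul_add_nonneg hβ x ν) zero_le_two)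
    (K0_nonneg _)

theorem S_pos {β : ℝ} (hβ : 0 < β) : 0 < S ν β := by
  rw [S_eq]
  refine mul_pos (one_div_pos.2 pi_pos) (integral_pos_of_nonneg_of_pos_of_ne_zero
    (integrable_S_evenPart ν β) (fun x => ?_) fun x hx => ?_)
  · exact mul_nonneg (div_nonneg (mul_tanh_mul_sub_add_tanh_mul_add_nonneg hβ.le x ν) zero_le_two)
      (K0_nonneg _)
  · exact mul_pos (half_pos (mul_tanh_mul_sub_add_tanh_mul_add_pos hβ hx ν))
      (K0_pos (abs_pos.2 hx))

theorem S_le : S ν β ≤ 2 / π := by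
  have hbound : ‖∫ x, tanh (β * x - ν) * x * K0 |x|‖ ≤ ∫ x, |x| * K0 |x| := by
    refine norm_integral_le_of_norm_le integrable_abs_mul_K0_abs
      (Eventually.of_forall fun x => ?_)
    rw [norm_mul, norm_mul, norm_of_nonneg (K0_nonneg _), Real.norm_eq_abs, Real.norm_eq_abs]
    exact mul_le_mul_of_nonneg_right
      (mul_le_of_le_one_left (abs_nonneg x) (abs_tanh_lt_one _).le) (K0_nonneg _)
  rw [integral_abs_mul_K0_abs, Real.norm_eq_abs] at hbound
  calc S ν β ≤ 1 / π * 2 :=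
        mul_le_mul_of_nonneg_left ((le_abs_self _).trans hbound) (one_div_pos.2 pi_pos).le
    _ = 2 / π := by ring

end NoSeparationEM

/-- (No-separation EM update bounds.)  For `β ≥ 0` and `ν ∈ ℝ`, set
`T(ν,β) = (1/π) ∫_ℝ tanh(ν - βx) K₀(|x|) dx` and
`S(ν,β) = (1/π) ∫_ℝ tanh(βx - ν) x K₀(|x|) dx`.  Then `|T| ≤ |tanh ν|`, `T` has the
same sign as `ν` (so if `tanh ν' = T` then `|ν'| ≤ |ν|` and `sgn ν' = sgn ν`), and
`0 ≤ S ≤ 2/π` with `S > 0` when `β > 0`. -/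
theorem no_separation_em_bounds (β ν : ℝ) (hβ : 0 ≤ β)
    (T S : ℝ)
    (hT : T = (1 / π) * ∫ x : ℝ, Real.tanh (ν - β * x) * K0 |x|)
    (hS : S = (1 / π) * ∫ x : ℝ, Real.tanh (β * x - ν) * x * K0 |x|) :
    (|T| ≤ |Real.tanh ν| ∧ Real.sign T = Real.sign ν ∧
      (∀ ν' : ℝ, Real.tanh ν' = T → |ν'| ≤ |ν| ∧ Real.sign ν' = Real.sign ν)) ∧
    (0 ≤ S ∧ S ≤ 2 / π ∧ (0 < β → 0 < S)) := by
  change T = NoSeparationEM.T ν β at hT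
  change S = NoSeparationEM.S ν β at hS
  subst hT hS
  refine ⟨⟨NoSeparationEM.abs_T_le ν β, NoSeparationEM.sign_T ν β, fun ν' hν' => ⟨?_, ?_⟩⟩,
    NoSeparationEM.S_nonneg ν hβ, NoSeparationEM.S_le ν β, NoSeparationEM.S_pos ν⟩
  · exact abs_le_abs_of_abs_tanh_le (hν' ▸ NoSeparationEM.abs_T_le ν β)
  · rw [← sign_tanh, hν', NoSeparationEM.sign_T]
end

section
/- (Recurrence relation for the sub-optimality angle.) Let θ, θ* ∈ ℝ^d be nonzero with ρ := ⟨θ,θ*⟩/(‖θ‖·‖θ*‖), ρ ≠ ±1, and φ := π/2 − arccos|ρ| ∈ [0, π/2). Define the noiseless population EM update θ′ := (2‖θ*‖/π)·( sgn(ρ)·φ·θ*/‖θ*‖ + cos(φ)·θ/‖θ‖ ), and let ρ′ := ⟨θ′,θ*⟩/(‖θ′‖·‖θ*‖) and φ′ := π/2 − arccos|ρ′|. Then φ′ ∈ [0, π/2) and tan φ′ = tan φ + φ·(tan²φ + 1). -/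
open Real InnerProductGeometry
open scoped RealInnerProductSpace

/-! With `u, v` the unit vectors along `θ, θ*`, one has `sgn(ρ) φ = arcsin ρ` and
`cos φ = √(1 - ρ²)`, so `θ'` points along `arcsin ρ • v + √(1 - ρ²) • u`. Its correlation
with `v` is `N / √(N² + (1 - ρ²)²)` with `N = arcsin ρ + ρ √(1 - ρ²)`, hence `φ'` is the
acute angle with tangent
`|N| / (1 - ρ²) = (φ + sin φ cos φ) / cos² φ = tan φ + φ (tan² φ + 1)`. -/

namespace Real

theorem sign_mul_arcsin_abs (x : ℝ) : sign x * arcsin |x| = arcsin x := by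
  rcases lt_trichotomy x 0 with hx | rfl | hx
  · rw [sign_of_neg hx, abs_of_neg hx, arcsin_neg]; ring
  · simp
  · rw [sign_of_pos hx, abs_of_pos hx, one_mul]

theorem abs_arcsin_add_mul_sqrt (x : ℝ) :
    |arcsin x + x * √(1 - x ^ 2)| = arcsin |x| + |x| * √(1 - x ^ 2) := by
  rcases le_total 0 x with hx | hx
  · have : 0 ≤ arcsin x := arcsin_nonneg.2 hx
    rw [abs_of_nonneg hx, abs_of_nonneg (by positivity)]
  · have : arcsin x ≤ 0 := arcsin_nonpos.2 hx
    have : x * √(1 - x ^ 2) ≤ 0 := mul_nonpos_of_nonpos_of_nonneg hx (sqrt_nonneg _)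
    rw [abs_of_nonpos hx, abs_of_nonpos (by linarith), arcsin_neg]
    ring

theorem div_sqrt_sq_add_sq_lt_one (a : ℝ) {b : ℝ} (hb : 0 < b) :
    a / √(a ^ 2 + b ^ 2) < 1 := by
  have hpos : 0 < √(a ^ 2 + b ^ 2) := sqrt_pos.2 (by positivity)
  rw [div_lt_one hpos]
  calc a ≤ |a| := le_abs_self a
    _ = √(a ^ 2) := (sqrt_sq_eq_abs a).symm
    _ < √(a ^ 2 + b ^ 2) := sqrt_lt_sqrt (sq_nonneg a) (by linarith [pow_pos hb 2])

theorem arcsin_div_sqrt_sq_add_sq_mem_Ico {a b : ℝ} (ha : 0 ≤ a) (hb : 0 < b) :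
    arcsin (a / √(a ^ 2 + b ^ 2)) ∈ Set.Ico 0 (π / 2) :=
  ⟨arcsin_nonneg.2 (by positivity), arcsin_lt_pi_div_two.2 (div_sqrt_sq_add_sq_lt_one a hb)⟩

theorem tan_arcsin_div_sqrt_sq_add_sq (a : ℝ) {b : ℝ} (hb : 0 < b) :
    tan (arcsin (a / √(a ^ 2 + b ^ 2))) = a / b := by
  have hS : 0 < a ^ 2 + b ^ 2 := by positivity
  have hpos : 0 < √(a ^ 2 + b ^ 2) := sqrt_pos.2 hS
  have hcos : 1 - (a / √(a ^ 2 + b ^ 2)) ^ 2 = (b / √(a ^ 2 + b ^ 2)) ^ 2 := by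
    rw [div_pow, div_pow, sq_sqrt hS.le]
    field_simp
    ring
  rw [tan_arcsin, hcos, sqrt_sq (by positivity)]
  field_simp

theorem arcsin_add_mul_sqrt_div_eq {x : ℝ} (hx : x ^ 2 < 1) :
    (arcsin x + x * √(1 - x ^ 2)) / (1 - x ^ 2) =
      tan (arcsin x) + arcsin x * (tan (arcsin x) ^ 2 + 1) := by
  rw [tan_arcsin]
  have hc : 0 < √(1 - x ^ 2) := sqrt_pos.2 (by linarith)
  have hc2 : √(1 - x ^ 2) ^ 2 = 1 - x ^ 2 := sq_sqrt (by linarith)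
  set c := √(1 - x ^ 2)
  rw [← hc2]
  field_simp
  linear_combination (-arcsin x) * hc2

end Real

section

variable {E : Type*} [NormedAddCommGroup E] [InnerProductSpace ℝ E]

theorem real_inner_smul_inv_norm (x y : E) :
    ⟪‖x‖⁻¹ • x, ‖y‖⁻¹ • y⟫ = ⟪x, y⟫ / (‖x‖ * ‖y‖) := by
  rw [real_inner_smul_left, real_inner_smul_right, div_eq_inv_mul, mul_inv]
  ring

theorem cos_angle_smul_add_smul_of_norm_eq_one {u v : E} (hu : ‖u‖ = 1) (hv : ‖v‖ = 1)
    (a b : ℝ) :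
    cos (angle (a • v + b • u) v) =
      (a + b * ⟪u, v⟫) / √(a ^ 2 + 2 * a * b * ⟪u, v⟫ + b ^ 2) := by
  have hnorm : ‖a • v + b • u‖ = √(a ^ 2 + 2 * a * b * ⟪u, v⟫ + b ^ 2) := by
    rw [← sqrt_sq (norm_nonneg _), norm_add_sq_real, norm_smul, norm_smul,
      real_inner_smul_left, real_inner_smul_right, real_inner_comm, hu, hv]
    congr 1
    rw [mul_pow, mul_pow, norm_eq_abs, norm_eq_abs, sq_abs, sq_abs]
    ring
  rw [cos_angle, hnorm, hv, mul_one, inner_add_left, real_inner_smul_left, real_inner_smul_left,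
    real_inner_self_eq_norm_sq, hv]
  ring

theorem cos_angle_arcsin_smul_add_sqrt_smul {u v : E} (hu : ‖u‖ = 1) (hv : ‖v‖ = 1)
    {ρ : ℝ} (huv : ⟪u, v⟫ = ρ) (hρ : ρ ^ 2 ≤ 1) :
    cos (angle (arcsin ρ • v + √(1 - ρ ^ 2) • u) v) =
      (arcsin ρ + ρ * √(1 - ρ ^ 2)) /
        √((arcsin ρ + ρ * √(1 - ρ ^ 2)) ^ 2 + (1 - ρ ^ 2) ^ 2) := by
  have hc2 : √(1 - ρ ^ 2) ^ 2 = 1 - ρ ^ 2 := sq_sqrt (by linarith)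
  rw [cos_angle_smul_add_smul_of_norm_eq_one hu hv, huv]
  congr 2
  · ring
  · linear_combination (1 - ρ ^ 2) * hc2

end

/-- (Recurrence relation for the sub-optimality angle.)
For nonzero `θ, θ*` with correlation `ρ ≠ ±1` and sub-optimality angle
`φ = π/2 - arccos |ρ| ∈ [0, π/2)`, the noiseless population EM update
`θ' = (2‖θ*‖/π)(sgn(ρ) φ θ*/‖θ*‖ + cos φ θ/‖θ‖)` has sub-optimality angle
`φ' ∈ [0, π/2)` satisfying `tan φ' = tan φ + φ (tan²φ + 1)`. -/
theorem em_angle_recurrence {d : ℕ}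
    (θ θs : EuclideanSpace ℝ (Fin d)) (hθ : θ ≠ 0) (hθs : θs ≠ 0)
    (ρ : ℝ) (hρ : ρ = ⟪θ, θs⟫ / (‖θ‖ * ‖θs‖)) (hρ1 : ρ ≠ 1) (hρ2 : ρ ≠ -1)
    (φ : ℝ) (hφ : φ = π / 2 - Real.arccos |ρ|)
    (θ' : EuclideanSpace ℝ (Fin d))
    (hθ' : θ' = (2 * ‖θs‖ / π) •
        ((Real.sign ρ * φ) • (‖θs‖⁻¹ • θs) + Real.cos φ • (‖θ‖⁻¹ • θ)))
    (ρ' φ' : ℝ) (hρ' : ρ' = ⟪θ', θs⟫ / (‖θ'‖ * ‖θs‖))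
    (hφ' : φ' = π / 2 - Real.arccos |ρ'|) :
    φ' ∈ Set.Ico 0 (π / 2) ∧
    Real.tan φ' = Real.tan φ + φ * (Real.tan φ ^ 2 + 1) := by
  set u := ‖θ‖⁻¹ • θ
  set v := ‖θs‖⁻¹ • θs
  have hθs_pos : 0 < ‖θs‖ := norm_pos_iff.2 hθs
  have huv : ⟪u, v⟫ = ρ := (real_inner_smul_inv_norm θ θs).trans hρ.symm
  have hρ_lt : |ρ| < 1 := (hρ ▸ abs_real_inner_div_norm_mul_norm_le_one θ θs).lt_of_ne
    fun h => ((abs_eq zero_le_one).1 h).elim hρ1 hρ2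
  have hρ_sq : ρ ^ 2 < 1 := (sq_lt_one_iff_abs_lt_one ρ).2 hρ_lt
  rw [← arcsin_eq_pi_div_two_sub_arccos] at hφ hφ'
  have hdir : θ' = (2 * ‖θs‖ / π) • (arcsin ρ • v + √(1 - ρ ^ 2) • u) := by
    rw [hθ', hφ, sign_mul_arcsin_abs, cos_arcsin, sq_abs]
  have hρ'_eq : ρ' = (arcsin ρ + ρ * √(1 - ρ ^ 2)) /
      √((arcsin ρ + ρ * √(1 - ρ ^ 2)) ^ 2 + (1 - ρ ^ 2) ^ 2) := by
    rw [hρ', ← cos_angle, hdir,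
      angle_smul_left_of_pos _ _ (div_pos (mul_pos two_pos hθs_pos) pi_pos),
      ← angle_smul_right_of_pos _ θs (inv_pos.2 hθs_pos)]
    exact cos_angle_arcsin_smul_add_sqrt_smul (norm_smul_inv_norm hθ) (norm_smul_inv_norm hθs)
      huv hρ_sq.le
  have hC : 0 < 1 - |ρ| ^ 2 := by rw [sq_abs]; linarith
  have hφ'_eq : φ' = arcsin ((arcsin |ρ| + |ρ| * √(1 - |ρ| ^ 2)) /
      √((arcsin |ρ| + |ρ| * √(1 - |ρ| ^ 2)) ^ 2 + (1 - |ρ| ^ 2) ^ 2)) := by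
    rw [hφ', hρ'_eq, abs_div, abs_of_nonneg (sqrt_nonneg _), ← sq_abs (arcsin ρ + _),
      abs_arcsin_add_mul_sqrt, sq_abs]
  refine ⟨hφ'_eq ▸ arcsin_div_sqrt_sq_add_sq_mem_Ico
    (add_nonneg (arcsin_nonneg.2 (abs_nonneg ρ)) (by positivity)) hC, ?_⟩
  rw [hφ'_eq, tan_arcsin_div_sqrt_sq_add_sq _ hC, hφ]
  exact arcsin_add_mul_sqrt_div_eq (by rwa [sq_abs])
end

section
/- (Cycloid trajectory.) Let θ, θ* ∈ ℝ^d be nonzero and non-parallel, ρ := ⟨θ,θ*⟩/(‖θ‖·‖θ*‖), φ := π/2 − arccos|ρ|, and ϕ := 2·arccos|ρ| ∈ (0, π]. Let ê₁ := θ*/‖θ*‖ and ê₂ := (θ/‖θ‖ − ρ·ê₁)/√(1−ρ²). Define the noiseless population EM update θ′ := (2‖θ*‖/π)·( sgn(ρ)·φ·ê₁ + cos(φ)·θ/‖θ‖ ), and write θ′/‖θ*‖ = x′·ê₁ + y′·ê₂ (θ′ lies in span{θ, θ*}). Then 1 − sgn(ρ)·x′ = (1/π)·(ϕ − sin ϕ)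 and y′ = (1/π)·(1 − cos ϕ); that is, the EM iterate lies on a cycloid with parameter ‖θ*‖/π in the plane span{θ, θ*}. -/
open Real
open scoped RealInnerProductSpace

/-!
In the orthonormal frame `ê₁, ê₂` obtained from `θ*` and `θ` by Gram–Schmidt,
`θ/‖θ‖ = ρ ê₁ + √(1-ρ²) ê₂`, so the EM update has coordinates
`x' = (2/π)(sgn ρ · φ + ρ cos φ)` and `y' = (2/π) √(1-ρ²) cos φ`.
With `α = arccos |ρ|` one has `cos α = |ρ|`, `sin α = cos φ = √(1-ρ²)` and `φ = π/2 - α`,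
and the double-angle formulas turn these coordinates into the cycloid
`(ϕ - sin ϕ, 1 - cos ϕ)/π` at `ϕ = 2α`.
-/

namespace Real

theorem sign_mul_self_eq_abs (x : ℝ) : sign x * x = |x| := by
  rcases lt_trichotomy x 0 with hx | rfl | hx
  · rw [sign_of_neg hx, abs_of_neg hx, neg_one_mul]
  · simp
  · rw [sign_of_pos hx, abs_of_pos hx, one_mul]

theorem sign_mul_sign_mul_eq_self {x c : ℝ} (h : x = 0 → c = 0) :
    sign x * (sign x * c) = c := by
  rcases eq_or_ne x 0 with rfl | hx
  · simp [h rfl]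
  · rcases sign_apply_eq_of_ne_zero x hx with hs | hs <;> simp [hs]

end Real

theorem one_sub_sign_mul_cycloid_abscissa {ρ : ℝ} (hρ : |ρ| ≤ 1) :
    1 - sign ρ * (2 / π * (sign ρ * (π / 2 - arccos |ρ|) + cos (π / 2 - arccos |ρ|) * ρ)) =
      (2 * arccos |ρ| - sin (2 * arccos |ρ|)) / π := by
  set α := arccos |ρ|
  have hcos : cos α = |ρ| := cos_arccos (by linarith [abs_nonneg ρ]) hρ
  have hzero : ρ = 0 → π / 2 - α = 0 := by rintro rfl; simp [α]
  calc 1 - sign ρ * (2 / π * (sign ρ * (π / 2 - α) + cos (π / 2 - α) * ρ))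
      = 1 - 2 / π * (sign ρ * (sign ρ * (π / 2 - α)) + sin α * (sign ρ * ρ)) := by
        rw [cos_pi_div_two_sub]; ring
    _ = 1 - 2 / π * (π / 2 - α + sin α * cos α) := by
        rw [sign_mul_sign_mul_eq_self hzero, sign_mul_self_eq_abs, hcos]
    _ = (2 * α - sin (2 * α)) / π := by
        rw [sin_two_mul]; field_simp; ring

theorem cycloid_ordinate {ρ : ℝ} (hρ : |ρ| ≤ 1) :
    2 / π * (cos (π / 2 - arccos |ρ|) * √(1 - ρ ^ 2)) = (1 - cos (2 * arccos |ρ|)) / π := by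
  have hsq : √(1 - ρ ^ 2) ^ 2 = 1 - ρ ^ 2 :=
    sq_sqrt (by nlinarith [abs_nonneg ρ, sq_abs ρ])
  rw [cos_pi_div_two_sub, sin_arccos, sq_abs, cos_two_mul,
    cos_arccos (by linarith [abs_nonneg ρ]) hρ, sq_abs]
  field_simp
  linarith

section InnerProductSpace

variable {E : Type*} [NormedAddCommGroup E] [InnerProductSpace ℝ E]

theorem abs_real_inner_div_norm_mul_norm_lt_one {x y : E} (h : ¬∃ c : ℝ, x = c • y) :
    |⟪x, y⟫ / (‖x‖ * ‖y‖)| < 1 := by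
  refine (abs_real_inner_div_norm_mul_norm_le_one x y).lt_of_ne fun h1 => h ?_
  rw [real_inner_comm, mul_comm] at h1
  obtain ⟨-, c, -, hc⟩ := (abs_real_inner_div_norm_mul_norm_eq_one_iff y x).mp h1
  exact ⟨c, hc⟩

theorem real_inner_inv_norm_smul_inv_norm_smul (x y : E) :
    ⟪‖y‖⁻¹ • y, ‖x‖⁻¹ • x⟫ = ⟪x, y⟫ / (‖x‖ * ‖y‖) := by
  rw [real_inner_smul_left, real_inner_smul_right, real_inner_comm]
  field_simp

theorem orthonormal_pair {e₁ e₂ : E} (h₁ : ‖e₁‖ = 1) (h₂ : ‖e₂‖ = 1) (h : ⟪e₁, e₂⟫ = 0) :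
    Orthonormal ℝ ![e₁, e₂] := by
  refine ⟨Fin.forall_fin_two.2 ⟨h₁, h₂⟩, ?_⟩
  intro i j hij
  fin_cases i <;> fin_cases j <;> simp_all [real_inner_comm]

theorem orthonormal_gramSchmidt_pair {e u : E} {ρ : ℝ} (he : ‖e‖ = 1) (hu : ‖u‖ = 1)
    (hρ : ⟪e, u⟫ = ρ) (hρ1 : |ρ| < 1) :
    Orthonormal ℝ ![e, (√(1 - ρ ^ 2))⁻¹ • (u - ρ • e)] := by
  have hs : 0 < 1 - ρ ^ 2 := by nlinarith [abs_nonneg ρ, sq_abs ρ]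
  have hnorm : ‖u - ρ • e‖ = √(1 - ρ ^ 2) := by
    rw [← sqrt_sq (norm_nonneg _), norm_sub_sq_real, real_inner_smul_right, real_inner_comm,
      hρ, norm_smul, he, hu, norm_eq_abs, mul_one, sq_abs]
    ring_nf
  refine orthonormal_pair he ?_ ?_
  · rw [norm_smul, hnorm, norm_inv, norm_of_nonneg (sqrt_nonneg _),
      inv_mul_cancel₀ (sqrt_pos.2 hs).ne']
  · rw [real_inner_smul_right, inner_sub_right, real_inner_smul_right,
      real_inner_self_eq_norm_sq, he, hρ]
    ring

end InnerProductSpace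

/-- (Cycloid trajectory.)  For nonzero, non-parallel `θ, θ*` with
correlation `ρ`, sub-optimality angle `φ = π/2 - arccos |ρ|`, and
`ϕ = 2 arccos |ρ|`, write the noiseless population EM update
`θ' = (2‖θ*‖/π)(sgn(ρ) φ ê₁ + cos φ θ/‖θ‖)` in the orthonormal frame
`ê₁ = θ*/‖θ*‖`, `ê₂ = (θ/‖θ‖ - ρ ê₁)/√(1-ρ²)` as `θ'/‖θ*‖ = x' ê₁ + y' ê₂`.
Then `1 - sgn(ρ) x' = (ϕ - sin ϕ)/π` and `y' = (1 - cos ϕ)/π`: the iterate lies on a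
cycloid with parameter `‖θ*‖/π` in the plane spanned by `θ` and `θ*`. -/
theorem em_cycloid_trajectory {d : ℕ}
    (θ θs : EuclideanSpace ℝ (Fin d)) (hθ : θ ≠ 0) (hθs : θs ≠ 0)
    (hpar : ¬ ∃ c : ℝ, θ = c • θs)
    (ρ : ℝ) (hρ : ρ = ⟪θ, θs⟫ / (‖θ‖ * ‖θs‖))
    (φ ϕ : ℝ) (hφ : φ = π / 2 - Real.arccos |ρ|) (hϕ : ϕ = 2 * Real.arccos |ρ|)
    (e1 e2 : EuclideanSpace ℝ (Fin d))
    (he1 : e1 = ‖θs‖⁻¹ • θs)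
    (he2 : e2 = (Real.sqrt (1 - ρ ^ 2))⁻¹ • (‖θ‖⁻¹ • θ - ρ • e1))
    (θ' : EuclideanSpace ℝ (Fin d))
    (hθ' : θ' = (2 * ‖θs‖ / π) •
        ((Real.sign ρ * φ) • e1 + Real.cos φ • (‖θ‖⁻¹ • θ)))
    (x' y' : ℝ) (hdecomp : θ' = ‖θs‖ • (x' • e1 + y' • e2)) :
    1 - Real.sign ρ * x' = (ϕ - Real.sin ϕ) / π ∧
    y' = (1 - Real.cos ϕ) / π := by
  have hρ1 : |ρ| < 1 := hρ ▸ abs_real_inner_div_norm_mul_norm_lt_one hpar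
  have hs : √(1 - ρ ^ 2) ≠ 0 :=
    (sqrt_pos.2 (by nlinarith [abs_nonneg ρ, sq_abs ρ])).ne'
  have horth : Orthonormal ℝ ![e1, e2] := by
    rw [he2, he1]
    exact orthonormal_gramSchmidt_pair (norm_smul_inv_norm hθs) (norm_smul_inv_norm hθ)
      (hρ ▸ real_inner_inv_norm_smul_inv_norm_smul θ θs) hρ1
  have hframe : ‖θ‖⁻¹ • θ = ρ • e1 + √(1 - ρ ^ 2) • e2 := by
    rw [he2, smul_inv_smul₀ hs, add_sub_cancel]
  have hcoord : x' • e1 + y' • e2 =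
      (2 / π * (sign ρ * φ + cos φ * ρ)) • e1 + (2 / π * (cos φ * √(1 - ρ ^ 2))) • e2 := by
    refine (smul_right_inj (norm_ne_zero_iff.2 hθs)).1 ?_
    rw [← hdecomp, hθ', hframe]
    module
  obtain ⟨rfl, rfl⟩ := horth.linearIndependent.eq_of_pair hcoord
  subst hφ hϕ
  exact ⟨one_sub_sign_mul_cycloid_abscissa hρ1.le, cycloid_ordinate hρ1.le⟩
end

section
/- (Linear growth of the tangent of the sub-optimality angle.) Let (a_t)_{t ≥ 0} be a real sequence with a₀ > 0 and a_{t+1} = a_t + arctan(a_t)·(a_t² + 1) for all t ≥ 0. Then for every t ≥ 0, a_{t+1} ≥ ((1 + √5)/2)·a_t. Equivalently, if φ⁰ ∈ (0, π/2) and the angles φ^t ∈ (0, π/2) satisfy tan φ^t = tan φ^{t−1} + φ^{t−1}(tan²φ^{t−1} + 1), then tan φ^t ≥ ((1 + √5)/2)·tan φ^{t−1} for all t ≥ 1. -/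
/-!
With `θ = arctan x ∈ [0, π/2)` for `x ≥ 0`, one has `x / (1 + x²) = sin θ cos θ = sin (2θ) / 2 ≤ θ`,
so `arctan x · (x² + 1) ≥ x`. Hence the recursion at least doubles a nonnegative term, the
sequence stays positive, and doubling beats the golden ratio `(1 + √5)/2 < 2`.
-/

open Real

lemma div_one_add_sq_le_arctan {x : ℝ} (hx : 0 ≤ x) : x / (1 + x ^ 2) ≤ arctan x := by
  have hsin : sin (2 * arctan x) = 2 * (x / (1 + x ^ 2)) := by
    rw [sin_two_mul, sin_arctan, cos_arctan, mul_assoc, div_mul_div_comm, mul_one,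
      mul_self_sqrt (by positivity)]
  have hθ : 0 ≤ 2 * arctan x := mul_nonneg zero_le_two (arctan_nonneg.mpr hx)
  linarith [sin_le hθ]

lemma le_arctan_mul_sq_add_one {x : ℝ} (hx : 0 ≤ x) : x ≤ arctan x * (x ^ 2 + 1) := by
  have h := div_one_add_sq_le_arctan hx
  rwa [div_le_iff₀ (by positivity), add_comm 1] at h

/-- (Linear growth of the tangent of the sub-optimality angle.)
If `a₀ > 0` and `a_{t+1} = a_t + arctan(a_t)(a_t² + 1)`, then
`a_{t+1} ≥ ((1 + √5)/2) a_t` for every `t`. -/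
theorem em_tangent_linear_growth (a : ℕ → ℝ) (ha0 : 0 < a 0)
    (hrec : ∀ t : ℕ, a (t + 1) = a t + Real.arctan (a t) * ((a t) ^ 2 + 1)) :
    ∀ t : ℕ, a (t + 1) ≥ ((1 + Real.sqrt 5) / 2) * a t := by
  have hdouble : ∀ t, 0 ≤ a t → 2 * a t ≤ a (t + 1) := fun t ht => by
    rw [hrec t]
    linarith [le_arctan_mul_sq_add_one ht]
  have hpos : ∀ t, 0 < a t := by
    intro t
    induction t with
    | zero => exact ha0
    | succ t ih => linarith [hdouble t ih.le]
  intro t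
  have hgolden : (1 + √5) / 2 < 2 := goldenRatio_lt_two
  nlinarith [hdouble t (hpos t).le, hpos t]
end

section
/- (Quadratic convergence of the tangent of the sub-optimality angle.) Let a ≥ 1.5 and define a′ := a + arctan(a)·(a² + 1). Then (π/2)·(a′ − π/4) ≥ [ (π/2)·(a − π/4) ]². Equivalently, if φ^{t−1} ∈ [arctan 1.5, π/2) and tan φ^t = tan φ^{t−1} + φ^{t−1}(tan²φ^{t−1} + 1), then (π/2)(tan φ^t − π/4) ≥ [ (π/2)(tan φ^{t−1} − π/4) ]². -/
/-!
Since `arctan a = π/2 - arctan a⁻¹ ≥ π/2 - a⁻¹`, the update satisfies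
`a' ≥ (π/2)(a² + 1) - a⁻¹`. Dividing the claim by `π/2`, it then reduces to
`π/4 + π²a/4 - π³/32 - a⁻¹ ≥ 0`, which holds with room to spare for `a ≥ 3/2`.
-/

open Real

namespace Real

theorem arctan_le_self {x : ℝ} (hx : 0 ≤ x) : arctan x ≤ x :=
  calc arctan x ≤ tan (arctan x) :=
        le_tan (arctan_nonneg.2 hx) (arctan_lt_pi_div_two x)
    _ = x := tan_arctan x

theorem pi_div_two_sub_inv_le_arctan {x : ℝ} (hx : 0 < x) : π / 2 - x⁻¹ ≤ arctan x := by
  have h := arctan_le_self (inv_nonneg.2 hx.le)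
  rw [arctan_inv_of_pos hx] at h
  linarith

theorem pi_div_two_mul_sq_add_one_sub_inv_le {x : ℝ} (hx : 0 < x) :
    π / 2 * (x ^ 2 + 1) - x⁻¹ ≤ x + arctan x * (x ^ 2 + 1) := by
  have h := mul_le_mul_of_nonneg_right (pi_div_two_sub_inv_le_arctan hx)
    (by positivity : (0 : ℝ) ≤ x ^ 2 + 1)
  have hinv : x⁻¹ * (x ^ 2 + 1) = x + x⁻¹ := by field_simp
  rw [sub_mul, hinv] at h
  linarith

end Real

theorem sq_pi_div_two_mul_sub_pi_div_four_le {a : ℝ} (ha : 3 / 2 ≤ a) :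
    ((π / 2) * (a - π / 4)) ^ 2 ≤ (π / 2) * (π / 2 * (a ^ 2 + 1) - a⁻¹ - π / 4) := by
  have hinv : a⁻¹ ≤ 2 / 3 := by
    rw [inv_le_comm₀ (by linarith) (by norm_num)]
    linarith
  have hgap : 0 ≤ π / 4 + π ^ 2 * a / 4 - π ^ 3 / 32 - a⁻¹ := by
    have h3 : 3 < π := pi_gt_three
    have h4 : π < 4 := pi_lt_four
    nlinarith [mul_le_mul_of_nonneg_left ha (sq_nonneg π)]
  have hexpand : (π / 2) * (π / 2 * (a ^ 2 + 1) - a⁻¹ - π / 4) - ((π / 2) * (a - π / 4)) ^ 2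
      = π / 2 * (π / 4 + π ^ 2 * a / 4 - π ^ 3 / 32 - a⁻¹) := by ring
  linarith [mul_nonneg (by positivity : (0 : ℝ) ≤ π / 2) hgap]

/-- (Quadratic convergence of the tangent of the sub-optimality
angle.)  If `a ≥ 1.5` and `a' = a + arctan(a)(a² + 1)`, then
`(π/2)(a' - π/4) ≥ ((π/2)(a - π/4))²`. -/
theorem em_tangent_quadratic_convergence (a a' : ℝ) (ha : 1.5 ≤ a)
    (ha' : a' = a + Real.arctan a * (a ^ 2 + 1)) :
    (π / 2) * (a' - π / 4) ≥ ((π / 2) * (a - π / 4)) ^ 2 := by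
  have ha₀ : 3 / 2 ≤ a := by norm_num at ha; linarith
  have hupdate : π / 2 * (a ^ 2 + 1) - a⁻¹ ≤ a' :=
    ha' ▸ pi_div_two_mul_sq_add_one_sub_inv_le (by linarith)
  calc ((π / 2) * (a - π / 4)) ^ 2
      ≤ (π / 2) * (π / 2 * (a ^ 2 + 1) - a⁻¹ - π / 4) := sq_pi_div_two_mul_sub_pi_div_four_le ha₀
    _ ≤ (π / 2) * (a' - π / 4) := by gcongr
end

section
/- (Quadratic contraction of the angle to the optimum.) Let ϕ ∈ (0, 1.18805] and set φ := π/2 − ϕ/2. Define ϕ′ ∈ (0, π) by tan(π/2 − ϕ′/2) = tan(φ) + φ·(tan²(φ) + 1). Then ϕ′ < ϕ²/π. -/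
/-!
Put `t = ϕ / 2`, so that `tan φ = cot t` and the update reads
`cot (ϕ' / 2) = cot t + (π / 2 - t) / sin² t`. The elementary bounds `cot t > 1 / t - t / 2`,
`1 / sin² t ≥ 1 / t² + 1 / 4` and `cot x < 1 / x - x / 4` give, at `x = 2 t² / π`,
`cot t + (π / 2 - t) / sin² t - cot x > (π² - 6 π t + 4 t²) / (8 π)`, which is positive as long as
`ϕ < (3 - √5) π / 2 ≈ 1.19998`. Since `cot` decreases on `(0, π)`, `ϕ' / 2 < x = ϕ² / (2 π)`.
-/

open Real Set

namespace Real

lemma tan_pi_div_two_sub_eq_cot (x : ℝ) : tan (π / 2 - x) = cot x := by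
  rw [tan_pi_div_two_sub, ← cot_inv_eq_tan, inv_inv]

lemma cot_sq_add_one {x : ℝ} (hx : sin x ≠ 0) : cot x ^ 2 + 1 = (sin x ^ 2)⁻¹ := by
  rw [cot_eq_cos_div_sin]
  field_simp
  linarith [sin_sq_add_cos_sq x]

lemma strictAntiOn_cot : StrictAntiOn cot (Ioo 0 π) := by
  intro a ⟨ha0, haπ⟩ b ⟨hb0, hbπ⟩ hab
  rw [← tan_pi_div_two_sub_eq_cot, ← tan_pi_div_two_sub_eq_cot]
  exact strictMonoOn_tan ⟨by linarith, by linarith⟩ ⟨by linarith, by linarith⟩ (by linarith)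

lemma inv_sub_half_mul_lt_cot {t : ℝ} (h0 : 0 < t) (h1 : t ≤ 1) : t⁻¹ - t / 2 < cot t := by
  have hsin : 0 < sin t := sin_pos_of_pos_of_lt_pi h0 (by linarith [pi_gt_three])
  have hcoef : 0 < t⁻¹ - t / 2 := by
    have : 1 ≤ t⁻¹ := one_le_inv₀ h0 |>.mpr h1
    linarith
  rw [cot_eq_cos_div_sin, lt_div_iff₀ hsin]
  calc (t⁻¹ - t / 2) * sin t < (t⁻¹ - t / 2) * t := mul_lt_mul_of_pos_left (sin_lt h0) hcoef
    _ = 1 - t ^ 2 / 2 := by field_simp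
    _ ≤ cos t := one_sub_sq_div_two_le_cos

lemma cot_lt_inv_sub_quarter_mul {x : ℝ} (h0 : 0 < x) (h1 : x ≤ 1) : cot x < x⁻¹ - x / 4 := by
  have hsin : 0 < sin x := sin_pos_of_pos_of_lt_pi h0 (by linarith [pi_gt_three])
  have hcoef : 0 < x⁻¹ - x / 4 := by
    have : 1 ≤ x⁻¹ := one_le_inv₀ h0 |>.mpr h1
    linarith
  have hcos : cos x ≤ 1 - x ^ 2 / 2 + x ^ 4 * (5 / 96) := by
    have := (abs_le.mp (cos_bound (abs_le.mpr ⟨by linarith, h1⟩))).2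
    rwa [abs_of_pos h0, sub_le_iff_le_add'] at this
  have hexpand : (x⁻¹ - x / 4) * (x - x ^ 3 / 6) = 1 - 5 * x ^ 2 / 12 + x ^ 4 / 24 := by
    field_simp
    ring
  rw [cot_eq_cos_div_sin, div_lt_iff₀ hsin]
  calc cos x ≤ 1 - x ^ 2 / 2 + x ^ 4 * (5 / 96) := hcos
    _ < (x⁻¹ - x / 4) * (x - x ^ 3 / 6) := by nlinarith [pow_pos h0 2]
    _ < (x⁻¹ - x / 4) * sin x := mul_lt_mul_of_pos_left (sin_gt_sub_cube h0) hcoef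

lemma sin_le_sub_cube_div_eight {t : ℝ} (h0 : 0 ≤ t) (h1 : t ≤ 1) : sin t ≤ t - t ^ 3 / 8 := by
  have := (abs_le.mp (sin_bound (abs_le.mpr ⟨by linarith, h1⟩))).2
  rw [abs_of_nonneg h0] at this
  nlinarith [mul_nonneg (pow_nonneg h0 3) (by nlinarith : (0 : ℝ) ≤ 1 - t ^ 2)]

lemma inv_sq_add_quarter_le_inv_sin_sq {t : ℝ} (h0 : 0 < t) (h1 : t ≤ 1) :
    (t ^ 2)⁻¹ + 1 / 4 ≤ (sin t ^ 2)⁻¹ := by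
  have hsin : 0 < sin t := sin_pos_of_pos_of_lt_pi h0 (by linarith [pi_gt_three])
  have hsq : sin t ^ 2 ≤ (t - t ^ 3 / 8) ^ 2 :=
    pow_le_pow_left₀ hsin.le (sin_le_sub_cube_div_eight h0.le h1) 2
  have hexpand : ((t ^ 2)⁻¹ + 1 / 4) * (t - t ^ 3 / 8) ^ 2 = (1 + t ^ 2 / 4) * (1 - t ^ 2 / 8) ^ 2 := by
    field_simp
  rw [inv_eq_one_div (sin t ^ 2), le_div_iff₀ (by positivity)]
  calc ((t ^ 2)⁻¹ + 1 / 4) * sin t ^ 2 ≤ ((t ^ 2)⁻¹ + 1 / 4) * (t - t ^ 3 / 8) ^ 2 := by gcongr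
    _ = (1 + t ^ 2 / 4) * (1 - t ^ 2 / 8) ^ 2 := hexpand
    _ ≤ 1 := by nlinarith [mul_nonneg (sq_nonneg (t ^ 2)) (by nlinarith : (0 : ℝ) ≤ 12 - t ^ 2)]

lemma cot_two_mul_sq_div_pi_lt {t : ℝ} (h0 : 0 < t) (h1 : t ≤ 1) (hx : 2 * t ^ 2 / π ≤ 1)
    (hq : 0 < π ^ 2 - 6 * π * t + 4 * t ^ 2) :
    cot (2 * t ^ 2 / π) < cot t + (π / 2 - t) * (cot t ^ 2 + 1) := by
  have hsin : sin t ≠ 0 := (sin_pos_of_pos_of_lt_pi h0 (by linarith [pi_gt_three])).ne'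
  have hcoef : 0 ≤ π / 2 - t := by linarith [pi_gt_three]
  rw [cot_sq_add_one hsin]
  calc cot (2 * t ^ 2 / π) < (2 * t ^ 2 / π)⁻¹ - 2 * t ^ 2 / π / 4 :=
        cot_lt_inv_sub_quarter_mul (by positivity) hx
    _ < t⁻¹ - t / 2 + (π / 2 - t) * ((t ^ 2)⁻¹ + 1 / 4) := by
        have hgap : t⁻¹ - t / 2 + (π / 2 - t) * ((t ^ 2)⁻¹ + 1 / 4)
            - ((2 * t ^ 2 / π)⁻¹ - 2 * t ^ 2 / π / 4) = (π ^ 2 - 6 * π * t + 4 * t ^ 2) / (8 * π) := by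
          field_simp
          ring
        have := div_pos hq (by positivity : 0 < 8 * π)
        linarith
    _ ≤ cot t + (π / 2 - t) * (sin t ^ 2)⁻¹ := by
        gcongr
        · exact (inv_sub_half_mul_lt_cot h0 (by linarith)).le
        · exact inv_sq_add_quarter_le_inv_sin_sq h0 h1

end Real

/-- (Quadratic contraction of the angle to the optimum.)
Let `ϕ ∈ (0, 1.18805]`, `φ = π/2 - ϕ/2`, and let `ϕ' ∈ (0, π)` satisfy
`tan(π/2 - ϕ'/2) = tan φ + φ (tan²φ + 1)`.  Then `ϕ' < ϕ²/π`. -/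
theorem em_angle_quadratic_contraction (ϕ : ℝ) (hϕ : ϕ ∈ Set.Ioc 0 1.18805)
    (φ : ℝ) (hφ : φ = π / 2 - ϕ / 2)
    (ϕ' : ℝ) (hϕ' : ϕ' ∈ Set.Ioo 0 π)
    (heq : Real.tan (π / 2 - ϕ' / 2) = Real.tan φ + φ * (Real.tan φ ^ 2 + 1)) :
    ϕ' < ϕ ^ 2 / π := by
  obtain ⟨hϕ0, hϕ1⟩ := hϕ
  obtain ⟨hϕ'0, hϕ'π⟩ := hϕ'
  set t := ϕ / 2 with ht
  have ht0 : 0 < t := by positivity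
  have ht1 : t ≤ 0.594025 := by norm_num at hϕ1 ⊢; linarith
  have hπ : 3.141592 < π := pi_gt_d6
  have hquad : 0 < π ^ 2 - 6 * π * t + 4 * t ^ 2 := by nlinarith
  have hx : 2 * t ^ 2 / π ≤ 1 := by rw [div_le_one pi_pos]; nlinarith
  have hcot : cot (2 * t ^ 2 / π) < cot (ϕ' / 2) := by
    rw [← tan_pi_div_two_sub_eq_cot (ϕ' / 2), heq, hφ, tan_pi_div_two_sub_eq_cot]
    exact cot_two_mul_sq_div_pi_lt ht0 (by linarith) hx hquad
  have hlt : ϕ' / 2 < 2 * t ^ 2 / π :=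
    (strictAntiOn_cot.lt_iff_gt ⟨by positivity, by linarith⟩ ⟨by linarith, by linarith⟩).mp hcot
  have hϕsq : ϕ ^ 2 / π = 2 * (2 * t ^ 2 / π) := by rw [ht]; ring
  linarith
end

section
/- (Population-level convergence.) There is an absolute constant C > 0 with the following property. Let θ⁰, θ* ∈ ℝ^d be nonzero with ρ⁰ := ⟨θ⁰,θ*⟩/(‖θ⁰‖·‖θ*‖) satisfying 0 < |ρ⁰| < 1, let ν* ∈ ℝ, and define iterates for t ≥ 0 by θ^{t+1} := (2‖θ*‖/π)·( sgn(ρ^t)·φ^t·θ*/‖θ*‖ + cos(φ^t)·θ^t/‖θ^t‖ ) and tanh(ν^{t+1}) := sgn(ρ⁰)·(2/π)·φ^t·tanh(ν*), where ρ^t := ⟨θ^t,θ*⟩/(‖θ^t‖·‖θ*‖) and φ^t := π/2 − arccos|ρ^t|. Then for every ε ∈ (0, 1/2), for every integer T ≥ C·( log(1/|ρ⁰|) + log log(1/ε) + 1 ), one has ‖θ^{T+1} − sgn(ρ⁰)·θ*‖ / ‖θ*‖ < ε and |tanh(ν^{T+1}) − sgn(ρ⁰)·tanh(ν*)| ≤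 C·√ε·|tanh ν*|. -/
open Real
open scoped RealInnerProductSpace

/-!
Write `s = |ρᵗ|`, `σ = sgn ρᵗ`, so that `φᵗ = arcsin s`. In the orthonormal pair formed by
`θ*/‖θ*‖` and the normalized component of `θᵗ` orthogonal to `θ*`, the vector `θᵗ⁺¹` is
proportional to `(σ N(s), 1 - s²)` with `N(s) = arcsin s + s √(1 - s²)`. So `ρ` keeps its sign and
`|ρᵗ⁺¹| = g(s) := N / √(N² + (1 - s²)²)`. Since `N ≥ s (1 + √(1 - s²))`, `g(s) ≥ 5s/4` while
`s ≤ 1/2`, which takes `O(log (1/|ρ⁰|))` steps, and afterwards `1 - g(s)² ≤ (1 - s²)²`, so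
`O(log log (1/ε))` more steps give `1 - s² ≤ ε²/4`. Jordan's inequality
`1 - 2φ/π ≤ √(1 - s²)` then bounds both the parameter error and the mixing-weight error by
multiples of `√(1 - s²)`.
-/

theorem Real.self_le_arcsin {s : ℝ} (h0 : 0 ≤ s) (h1 : s ≤ 1) : s ≤ arcsin s := by
  simpa [sin_arcsin (by linarith) h1] using sin_le (arcsin_nonneg.2 h0)

theorem Real.two_div_pi_mul_arcsin_le_one (s : ℝ) : 2 / π * arcsin s ≤ 1 := by
  have := arcsin_le_pi_div_two s
  rw [div_mul_eq_mul_div, div_le_one pi_pos]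
  linarith

/-- Jordan's inequality `2x/π ≤ sin x` at `x = arccos s`. -/
theorem Real.one_sub_two_div_pi_mul_arcsin_le {s : ℝ} (h0 : 0 ≤ s) :
    1 - 2 / π * arcsin s ≤ √(1 - s ^ 2) := by
  have hJordan := mul_le_sin (arccos_nonneg s) (arccos_le_pi_div_two.2 h0)
  rw [sin_arccos, arccos_eq_pi_div_two_sub_arcsin] at hJordan
  convert hJordan using 1
  field_simp

theorem Real.sign_sq_of_ne_zero {r : ℝ} (hr : r ≠ 0) : Real.sign r ^ 2 = 1 := by
  rcases sign_apply_eq_of_ne_zero r hr with h | h <;> simp [h]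

theorem Real.abs_sign_of_ne_zero {r : ℝ} (hr : r ≠ 0) : |Real.sign r| = 1 := by
  rcases sign_apply_eq_of_ne_zero r hr with h | h <;> simp [h]

theorem Real.abs_sign_mul_of_ne_zero {r : ℝ} (hr : r ≠ 0) (a : ℝ) : |Real.sign r * a| = |a| := by
  rw [abs_mul, Real.abs_sign_of_ne_zero hr, one_mul]

theorem Real.sign_mul_abs (r : ℝ) : Real.sign r * |r| = r := by
  rcases lt_trichotomy r 0 with h | rfl | h
  · rw [sign_of_neg h, abs_of_neg h, neg_one_mul, neg_neg]
  · rw [abs_zero, mul_zero]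
  · rw [sign_of_pos h, abs_of_pos h, one_mul]

theorem Real.sign_sign_mul_of_pos {r a : ℝ} (hr : r ≠ 0) (ha : 0 < a) :
    Real.sign (Real.sign r * a) = Real.sign r := by
  rcases sign_apply_eq_of_ne_zero r hr with h | h <;> rw [h]
  · rw [neg_one_mul, sign_of_neg (neg_neg_of_pos ha)]
  · rw [one_mul, sign_of_pos ha]

namespace EMPopulation

noncomputable def nextCorrNum (s : ℝ) : ℝ := arcsin s + s * √(1 - s ^ 2)

/-- `g(s)`: the value of `|ρᵗ⁺¹|` when `|ρᵗ| = s`. -/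
noncomputable def nextCorr (s : ℝ) : ℝ :=
  nextCorrNum s / √(nextCorrNum s ^ 2 + (1 - s ^ 2) ^ 2)

section NextCorr

variable {s : ℝ}

theorem mul_one_add_le_nextCorrNum (h0 : 0 ≤ s) (h1 : s ≤ 1) :
    s * (1 + √(1 - s ^ 2)) ≤ nextCorrNum s := by
  unfold nextCorrNum
  linarith [self_le_arcsin h0 h1]

theorem nextCorrNum_pos (h0 : 0 < s) (h1 : s ≤ 1) : 0 < nextCorrNum s :=
  (by positivity : 0 < s * (1 + √(1 - s ^ 2))).trans_le (mul_one_add_le_nextCorrNum h0.le h1)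

theorem nextCorr_sq (s : ℝ) :
    nextCorr s ^ 2 = nextCorrNum s ^ 2 / (nextCorrNum s ^ 2 + (1 - s ^ 2) ^ 2) := by
  rw [nextCorr, div_pow, sq_sqrt (by positivity)]

theorem nextCorr_pos (h0 : 0 < s) (h1 : s ≤ 1) : 0 < nextCorr s := by
  have := nextCorrNum_pos h0 h1
  unfold nextCorr
  positivity

theorem nextCorr_lt_one (h0 : 0 < s) (h1 : s < 1) : nextCorr s < 1 := by
  have hN := nextCorrNum_pos h0 h1.le
  refine lt_of_pow_lt_pow_left₀ 2 zero_le_one ?_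
  rw [nextCorr_sq, one_pow, div_lt_one (by positivity)]
  have : 0 < 1 - s ^ 2 := by nlinarith
  nlinarith

theorem le_nextCorr_of_sq_mul_le {a : ℝ} (h0 : 0 < s) (h1 : s ≤ 1) (ha : 0 ≤ a)
    (h : a ^ 2 * (nextCorrNum s ^ 2 + (1 - s ^ 2) ^ 2) ≤ nextCorrNum s ^ 2) :
    a ≤ nextCorr s := by
  have := nextCorrNum_pos h0 h1
  refine (pow_le_pow_iff_left₀ ha (nextCorr_pos h0 h1).le two_ne_zero).1 ?_
  rw [nextCorr_sq, le_div_iff₀ (by positivity)]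
  exact h

theorem self_le_nextCorr (h0 : 0 < s) (h1 : s ≤ 1) : s ≤ nextCorr s := by
  refine le_nextCorr_of_sq_mul_le h0 h1 h0.le ?_
  have hc := sq_sqrt (by nlinarith : 0 ≤ 1 - s ^ 2)
  have hN := mul_one_add_le_nextCorrNum h0.le h1
  have hsc : 0 ≤ s * √(1 - s ^ 2) := by positivity
  have hN2 : (s * √(1 - s ^ 2)) ^ 2 ≤ nextCorrNum s ^ 2 := by gcongr; linarith
  nlinarith [mul_le_mul_of_nonneg_left hN2 (by nlinarith : 0 ≤ 1 - s ^ 2)]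

theorem five_fourths_mul_le_nextCorr (h0 : 0 < s) (h1 : s ≤ 1 / 2) :
    5 / 4 * s ≤ nextCorr s := by
  refine le_nextCorr_of_sq_mul_le h0 (by linarith) (by positivity) ?_
  set c := √(1 - s ^ 2)
  have hc : c ^ 2 = 1 - s ^ 2 := sq_sqrt (by nlinarith)
  have hc0 : 0 ≤ c := sqrt_nonneg _
  have hc1 : c ≤ 1 := by nlinarith
  have hc85 : 17 / 20 ≤ c := by nlinarith
  have hN := mul_one_add_le_nextCorrNum h0.le (by linarith)
  have hN2 : (s * (1 + c)) ^ 2 ≤ nextCorrNum s ^ 2 := by gcongr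
  rw [← hc]
  nlinarith [mul_le_mul_of_nonneg_left hN2 (by nlinarith : 0 ≤ 1 - 25 / 16 * s ^ 2)]

theorem one_sub_nextCorr_sq_le (h0 : 0 < s) (h1 : s ≤ 1) :
    1 - nextCorr s ^ 2 ≤ (1 - s ^ 2) ^ 2 := by
  set c := √(1 - s ^ 2)
  have hc : c ^ 2 = 1 - s ^ 2 := sq_sqrt (by nlinarith)
  have hc0 : 0 ≤ c := sqrt_nonneg _
  have hN := mul_one_add_le_nextCorrNum h0.le h1
  have hN2 : (s * (1 + c)) ^ 2 ≤ nextCorrNum s ^ 2 := by gcongr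
  have hD : 1 ≤ nextCorrNum s ^ 2 + (1 - s ^ 2) ^ 2 := by
    rw [← hc]; nlinarith [mul_nonneg hc0 (sq_nonneg s)]
  rw [nextCorr_sq, one_sub_div (by positivity), add_sub_cancel_left]
  exact div_le_self (sq_nonneg _) hD

end NextCorr

section Geometry

variable {E : Type*} [NormedAddCommGroup E] [InnerProductSpace ℝ E]

noncomputable def corr (x y : E) : ℝ := ⟪x, y⟫ / (‖x‖ * ‖y‖)

/-- The update `θᵗ⁺¹` computed from `x = θᵗ`, with `y = θ*`, `σ = sgn ρᵗ` and `φ = φᵗ`. -/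
noncomputable def emStep (y x : E) (σ φ : ℝ) : E :=
  (2 * ‖y‖ / π) • ((σ * φ) • (‖y‖⁻¹ • y) + cos φ • (‖x‖⁻¹ • x))

theorem norm_smul_add_smul_sq_of_norm_eq_one {u v : E} (hu : ‖u‖ = 1) (hv : ‖v‖ = 1) (a b : ℝ) :
    ‖a • u + b • v‖ ^ 2 = a ^ 2 + b ^ 2 + 2 * a * b * ⟪u, v⟫ := by
  rw [norm_add_sq_real, norm_smul, norm_smul, real_inner_smul_left, real_inner_smul_right, hu, hv,
    norm_eq_abs, norm_eq_abs, mul_pow, mul_pow, sq_abs, sq_abs]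
  ring

theorem inner_smul_add_smul_of_norm_eq_one {u : E} (hu : ‖u‖ = 1) (v : E) (a b : ℝ) :
    ⟪a • u + b • v, u⟫ = a + b * ⟪v, u⟫ := by
  rw [inner_add_left, real_inner_smul_left, real_inner_smul_left, real_inner_self_eq_norm_sq, hu,
    one_pow, mul_one]

theorem inner_inv_norm_smul (x y : E) : ⟪‖y‖⁻¹ • y, ‖x‖⁻¹ • x⟫ = corr x y := by
  rw [corr, real_inner_smul_left, real_inner_smul_right, real_inner_comm, div_eq_mul_inv, mul_inv]
  ring

theorem norm_inv_norm_smul {x : E} (hx : x ≠ 0) : ‖‖x‖⁻¹ • x‖ = 1 := by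
  rw [norm_smul, norm_inv, norm_norm, inv_mul_cancel₀ (norm_ne_zero_iff.2 hx)]

variable {x y : E} {σ s : ℝ}

theorem inner_emStep_arcsin (hy : y ≠ 0) (hρ : corr x y = σ * s) :
    ⟪emStep y x σ (arcsin s), y⟫ = 2 * ‖y‖ / π * ‖y‖ * (σ * nextCorrNum s) := by
  have hy' : y = ‖y‖ • (‖y‖⁻¹ • y) := (smul_inv_smul₀ (norm_ne_zero_iff.2 hy) y).symm
  have huv : ⟪‖x‖⁻¹ • x, ‖y‖⁻¹ • y⟫ = σ * s := by rw [real_inner_comm, inner_inv_norm_smul, hρ]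
  calc ⟪emStep y x σ (arcsin s), y⟫ = ‖y‖ * ⟪emStep y x σ (arcsin s), ‖y‖⁻¹ • y⟫ := by
        rw [← real_inner_smul_right, ← hy']
    _ = _ := by
      rw [emStep, real_inner_smul_left, inner_smul_add_smul_of_norm_eq_one (norm_inv_norm_smul hy),
        huv, cos_arcsin, nextCorrNum]
      ring

theorem norm_emStep_arcsin (hx : x ≠ 0) (hy : y ≠ 0) (hσ : σ ^ 2 = 1) (hs : s ^ 2 ≤ 1)
    (hρ : corr x y = σ * s) :
    ‖emStep y x σ (arcsin s)‖ = 2 * ‖y‖ / π * √(nextCorrNum s ^ 2 + (1 - s ^ 2) ^ 2) := by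
  rw [emStep, norm_smul, norm_of_nonneg (by positivity), ← sqrt_sq (norm_nonneg (_ + _)),
    norm_smul_add_smul_sq_of_norm_eq_one (norm_inv_norm_smul hy) (norm_inv_norm_smul hx),
    inner_inv_norm_smul, hρ, cos_arcsin, nextCorrNum]
  have hc := sq_sqrt (sub_nonneg.2 hs)
  congr 2
  linear_combination (arcsin s ^ 2 + 2 * arcsin s * s * √(1 - s ^ 2)) * hσ + (1 - s ^ 2) * hc

theorem emStep_arcsin_ne_zero (hx : x ≠ 0) (hy : y ≠ 0) (hσ : σ ^ 2 = 1) (hs0 : 0 < s) (hs1 : s ≤ 1)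
    (hρ : corr x y = σ * s) : emStep y x σ (arcsin s) ≠ 0 := by
  have := nextCorrNum_pos hs0 hs1
  rw [← norm_ne_zero_iff, norm_emStep_arcsin hx hy hσ (by nlinarith) hρ]
  have := norm_pos_iff.2 hy
  positivity

theorem corr_emStep_arcsin (hx : x ≠ 0) (hy : y ≠ 0) (hσ : σ ^ 2 = 1) (hs0 : 0 < s) (hs1 : s ≤ 1)
    (hρ : corr x y = σ * s) : corr (emStep y x σ (arcsin s)) y = σ * nextCorr s := by
  have := nextCorrNum_pos hs0 hs1
  have := norm_pos_iff.2 hy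
  rw [corr, inner_emStep_arcsin hy hρ, norm_emStep_arcsin hx hy hσ (by nlinarith) hρ, nextCorr]
  field_simp

theorem norm_emStep_arcsin_sub_sq_le (hx : x ≠ 0) (hy : y ≠ 0) (hσ : σ ^ 2 = 1) (hs0 : 0 ≤ s)
    (hs1 : s ≤ 1) (hρ : corr x y = σ * s) :
    ‖emStep y x σ (arcsin s) - σ • y‖ ^ 2 ≤ 2 * (1 - s ^ 2) * ‖y‖ ^ 2 := by
  set c := √(1 - s ^ 2)
  set a := 2 / π * arcsin s - 1
  set b := 2 / π * c
  have hdiff :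
      emStep y x σ (arcsin s) - σ • y = ‖y‖ • ((σ * a) • (‖y‖⁻¹ • y) + b • (‖x‖⁻¹ • x)) := by
    have hy' : σ • y = (σ * ‖y‖) • (‖y‖⁻¹ • y) := by
      rw [mul_smul, smul_inv_smul₀ (norm_ne_zero_iff.2 hy)]
    rw [emStep, cos_arcsin, hy']
    module
  have hc : c ^ 2 = 1 - s ^ 2 := sq_sqrt (by nlinarith)
  have hπ : 2 / π ≤ 1 := by rw [div_le_one pi_pos]; linarith [pi_gt_three]
  have ha0 : a ≤ 0 := sub_nonpos.2 (two_div_pi_mul_arcsin_le_one s)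
  have ha : a ^ 2 ≤ c ^ 2 := by
    have := one_sub_two_div_pi_mul_arcsin_le hs0
    nlinarith
  have hb0 : 0 ≤ b := by positivity
  have hb : b ^ 2 ≤ c ^ 2 := by
    have : b ≤ c := mul_le_of_le_one_left (sqrt_nonneg _) hπ
    nlinarith
  rw [hdiff, norm_smul, mul_pow, norm_norm,
    norm_smul_add_smul_sq_of_norm_eq_one (norm_inv_norm_smul hy) (norm_inv_norm_smul hx),
    inner_inv_norm_smul, hρ, mul_comm (2 * (1 - s ^ 2))]
  gcongr
  nlinarith [mul_nonpos_of_nonpos_of_nonneg ha0 (mul_nonneg hb0 hs0)]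

end Geometry

section Iterates

variable {E : Type*} [NormedAddCommGroup E] [InnerProductSpace ℝ E]
  {θ : ℕ → E} {θs : E} {ρ : ℕ → ℝ}

theorem corr_succ (hθs : θs ≠ 0) (hρ : ∀ t, ρ t = corr (θ t) θs)
    (hθ : ∀ t, θ (t + 1) = emStep θs (θ t) (Real.sign (ρ t)) (arcsin |ρ t|)) {t : ℕ}
    (hθt : θ t ≠ 0) (h0 : 0 < |ρ t|) (h1 : |ρ t| ≤ 1) :
    θ (t + 1) ≠ 0 ∧ ρ (t + 1) = Real.sign (ρ t) * nextCorr |ρ t| := by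
  have hσ := Real.sign_sq_of_ne_zero (abs_pos.1 h0)
  have hcorr : corr (θ t) θs = Real.sign (ρ t) * |ρ t| := by rw [Real.sign_mul_abs, hρ]
  rw [hρ, hθ]
  exact ⟨emStep_arcsin_ne_zero hθt hθs hσ h0 h1 hcorr, corr_emStep_arcsin hθt hθs hσ h0 h1 hcorr⟩

theorem iterate_invariant (hθ0 : θ 0 ≠ 0) (hθs : θs ≠ 0) (hρ : ∀ t, ρ t = corr (θ t) θs)
    (hρ0 : 0 < |ρ 0|) (hρ1 : |ρ 0| < 1)
    (hθ : ∀ t, θ (t + 1) = emStep θs (θ t) (Real.sign (ρ t)) (arcsin |ρ t|)) (t : ℕ) :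
    θ t ≠ 0 ∧ 0 < |ρ t| ∧ |ρ t| < 1 ∧ Real.sign (ρ t) = Real.sign (ρ 0) := by
  induction t with
  | zero => exact ⟨hθ0, hρ0, hρ1, rfl⟩
  | succ t ih =>
    obtain ⟨hθt, h0, h1, hσ⟩ := ih
    obtain ⟨hθt', hρt'⟩ := corr_succ hθs hρ hθ hθt h0 h1.le
    have hg0 := nextCorr_pos h0 h1.le
    have habs : |ρ (t + 1)| = nextCorr |ρ t| := by
      rw [hρt', Real.abs_sign_mul_of_ne_zero (abs_pos.1 h0), abs_of_pos hg0]
    refine ⟨hθt', habs ▸ hg0, habs ▸ nextCorr_lt_one h0 h1, ?_⟩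
    rw [hρt', Real.sign_sign_mul_of_pos (abs_pos.1 h0) hg0, hσ]

theorem abs_corr_succ (hθ0 : θ 0 ≠ 0) (hθs : θs ≠ 0) (hρ : ∀ t, ρ t = corr (θ t) θs)
    (hρ0 : 0 < |ρ 0|) (hρ1 : |ρ 0| < 1)
    (hθ : ∀ t, θ (t + 1) = emStep θs (θ t) (Real.sign (ρ t)) (arcsin |ρ t|)) (t : ℕ) :
    |ρ (t + 1)| = nextCorr |ρ t| := by
  obtain ⟨hθt, h0, h1, -⟩ := iterate_invariant hθ0 hθs hρ hρ0 hρ1 hθ t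
  rw [(corr_succ hθs hρ hθ hθt h0 h1.le).2, Real.abs_sign_mul_of_ne_zero (abs_pos.1 h0),
    abs_of_pos (nextCorr_pos h0 h1.le)]

end Iterates

theorem min_le_of_mul_le_succ {a : ℕ → ℝ} {b q : ℝ} (hq : 0 ≤ q) (hmono : ∀ t, a t ≤ a (t + 1))
    (hgrow : ∀ t, a t ≤ b → q * a t ≤ a (t + 1)) (t : ℕ) : min b (q ^ t * a 0) ≤ a t := by
  induction t with
  | zero => simp
  | succ t ih =>
    rcases le_or_gt (a t) b with hb | hb
    · rcases le_or_gt (q ^ t * a 0) b with hq' | hq'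
      · calc min b (q ^ (t + 1) * a 0) ≤ q * (q ^ t * a 0) :=
            (min_le_right _ _).trans_eq (by ring)
          _ ≤ q * a t := mul_le_mul_of_nonneg_left (min_eq_right hq' ▸ ih) hq
          _ ≤ a (t + 1) := hgrow t hb
      · exact (min_le_left _ _).trans ((min_eq_left hq'.le ▸ ih).trans (hmono t))
    · exact (min_le_left _ _).trans (hb.le.trans (hmono t))

theorem le_pow_two_pow_of_le_sq {e : ℕ → ℝ} (h0 : ∀ t, 0 ≤ e t) (h : ∀ t, e (t + 1) ≤ e t ^ 2)
    (t : ℕ) : e t ≤ e 0 ^ 2 ^ t := by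
  induction t with
  | zero => simp
  | succ t ih =>
    calc e (t + 1) ≤ e t ^ 2 := h t
      _ ≤ (e 0 ^ 2 ^ t) ^ 2 := pow_le_pow_left₀ (h0 t) ih 2
      _ = e 0 ^ 2 ^ (t + 1) := by rw [← pow_mul, pow_succ]

theorem one_le_five_fourths_pow_mul {a : ℝ} (ha : 0 < a) {m : ℕ} (hm : 5 * log (1 / a) ≤ m) :
    1 ≤ (5 / 4) ^ m * a := by
  have h54 : 1 / 5 ≤ log (5 / 4) := by
    have := one_sub_inv_le_log_of_pos (by norm_num : (0 : ℝ) < 5 / 4)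
    norm_num at this ⊢
    linarith
  have hlog : log (1 / a) ≤ log ((5 / 4) ^ m) := by
    rw [log_pow]
    nlinarith [(Nat.cast_nonneg m : (0 : ℝ) ≤ m)]
  rw [← div_le_iff₀ ha]
  exact (log_le_log_iff (by positivity) (by positivity)).1 hlog

theorem three_fourths_pow_le {ε : ℝ} (hε0 : 0 < ε) (hε : ε ≤ 1 / 2) {n : ℕ}
    (hn : 16 * log (1 / ε) ≤ n) : (3 / 4 : ℝ) ^ n ≤ ε ^ 2 / 4 := by
  have h34 : log (3 / 4) ≤ -1 / 4 := by
    have := log_le_sub_one_of_pos (by norm_num : (0 : ℝ) < 3 / 4)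
    linarith
  have hL : log 2 ≤ log (1 / ε) := log_le_log two_pos (by rw [le_div_iff₀ hε0]; linarith)
  have hlog : log (ε ^ 2 / 4) = -2 * log (1 / ε) - 2 * log 2 := by
    rw [log_div (by positivity) (by norm_num), log_pow, one_div, log_inv,
      show (4 : ℝ) = 2 ^ 2 by norm_num, log_pow]
    push_cast
    ring
  rw [← log_le_log_iff (by positivity) (by positivity), log_pow, hlog]
  nlinarith [(Nat.cast_nonneg n : (0 : ℝ) ≤ n)]

theorem sixteen_mul_le_two_pow {L : ℝ} (hL : 0 < L) {j : ℕ} (hj : 2 * log L + 4 ≤ j)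
    (hj4 : 4 ≤ j) : 16 * L ≤ 2 ^ j := by
  have h2 : 1 / 2 < log 2 := by linarith [log_two_gt_d9]
  have hj4' : (4 : ℝ) ≤ j := by exact_mod_cast hj4
  rw [← log_le_log_iff (by positivity) (by positivity), log_mul (by norm_num) hL.ne', log_pow,
    show (16 : ℝ) = 2 ^ 4 by norm_num, log_pow]
  push_cast
  nlinarith

theorem neg_one_half_lt_log_log_two : -1 / 2 < log (log 2) := by
  rw [lt_log_iff_exp_lt (log_pos one_lt_two), show (-1 / 2 : ℝ) = -(1 / 2) by norm_num, exp_neg]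
  have := add_one_le_exp (1 / 2)
  have : (2 / 3 : ℝ) < log 2 := by linarith [log_two_gt_d9]
  calc (exp (1 / 2))⁻¹ ≤ (3 / 2)⁻¹ := inv_anti₀ (by norm_num) (by linarith)
    _ < log 2 := by norm_num; linarith

theorem one_sub_sq_le_of_nextCorr_iterate {s : ℕ → ℝ} (hs0 : ∀ t, 0 < s t) (hs1 : ∀ t, s t < 1)
    (hs : ∀ t, s (t + 1) = nextCorr (s t)) {ε : ℝ} (hε0 : 0 < ε) (hε : ε < 1 / 2) {T : ℕ}
    (hT : 100 * (log (1 / s 0) + log (log (1 / ε)) + 1) ≤ T) : 1 - s T ^ 2 ≤ ε ^ 2 / 4 := by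
  set m := ⌈5 * log (1 / s 0)⌉₊
  have hL0 : 0 ≤ log (1 / s 0) := log_nonneg (by rw [le_div_iff₀ (hs0 0)]; linarith [hs1 0])
  have hm : (m : ℝ) < 5 * log (1 / s 0) + 1 := Nat.ceil_lt_add_one (by positivity)
  have hL : log 2 ≤ log (1 / ε) := log_le_log two_pos (by rw [le_div_iff₀ hε0]; linarith)
  have hLL : -1 / 2 < log (log (1 / ε)) :=
    neg_one_half_lt_log_log_two.trans_le (log_le_log (log_pos one_lt_two) hL)
  obtain ⟨j, rfl⟩ : ∃ j, T = m + j := ⟨T - m, by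
    have : (m : ℝ) ≤ T := by linarith
    exact_mod_cast (Nat.add_sub_of_le (by exact_mod_cast this)).symm⟩
  have hj : 100 * (log (1 / s 0) + log (log (1 / ε)) + 1) ≤ m + j := by exact_mod_cast hT
  have hhalf : 1 / 2 ≤ s m := by
    have hgrowth := min_le_of_mul_le_succ (by norm_num : (0 : ℝ) ≤ 5 / 4)
      (fun t ↦ (hs t).symm ▸ self_le_nextCorr (hs0 t) (hs1 t).le)
      (fun t ht ↦ (hs t).symm ▸ five_fourths_mul_le_nextCorr (hs0 t) ht) m
    have := one_le_five_fourths_pow_mul (hs0 0) (Nat.le_ceil _)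
    rwa [min_eq_left (by linarith)] at hgrowth
  have hdecay := le_pow_two_pow_of_le_sq (e := fun t ↦ 1 - s (m + t) ^ 2)
    (fun t ↦ by nlinarith [hs0 (m + t), hs1 (m + t)])
    (fun t ↦ (hs (m + t)).symm ▸ one_sub_nextCorr_sq_le (hs0 (m + t)) (hs1 (m + t)).le) j
  calc 1 - s (m + j) ^ 2 ≤ (1 - s m ^ 2) ^ 2 ^ j := hdecay
    _ ≤ (3 / 4) ^ 2 ^ j := by gcongr <;> nlinarith [hs1 m]
    _ ≤ ε ^ 2 / 4 := three_fourths_pow_le hε0 hε.le <| by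
        have h4 : (4 : ℝ) ≤ j := by linarith
        exact_mod_cast sixteen_mul_le_two_pow ((log_pos one_lt_two).trans_le hL) (by linarith)
          (by exact_mod_cast h4)

theorem abs_sign_mul_arcsin_mul_sub_le {σ s τ : ℝ} (hσ : |σ| = 1) (hs : 0 ≤ s) :
    |σ * (2 / π) * arcsin s * τ - σ * τ| ≤ √(1 - s ^ 2) * |τ| := by
  rw [show σ * (2 / π) * arcsin s * τ - σ * τ = σ * (2 / π * arcsin s - 1) * τ by ring, abs_mul,
    abs_mul, hσ, one_mul, abs_of_nonpos (sub_nonpos.2 (two_div_pi_mul_arcsin_le_one s)), neg_sub]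
  gcongr
  exact one_sub_two_div_pi_mul_arcsin_le hs

end EMPopulation

/-- (Population-level convergence.)  There is an absolute constant
`C > 0` such that for any noiseless population EM iterates
`θ^{t+1} = (2‖θ*‖/π)(sgn(ρ^t) φ^t θ*/‖θ*‖ + cos(φ^t) θ^t/‖θ^t‖)`,
`tanh(ν^{t+1}) = sgn(ρ⁰)(2/π) φ^t tanh(ν*)`, started from `θ⁰` with
`0 < |ρ⁰| < 1`, and any `ε ∈ (0, 1/2)`: once
`T ≥ C (log(1/|ρ⁰|) + log log (1/ε) + 1)`, one has
`‖θ^{T+1} - sgn(ρ⁰) θ*‖/‖θ*‖ < ε` and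
`|tanh(ν^{T+1}) - sgn(ρ⁰) tanh ν*| ≤ C √ε |tanh ν*|`. -/
theorem em_population_convergence :
    ∃ C : ℝ, 0 < C ∧
      ∀ (d : ℕ) (θ : ℕ → EuclideanSpace ℝ (Fin d)) (θs : EuclideanSpace ℝ (Fin d))
        (ν : ℕ → ℝ) (νs : ℝ) (ρ φ : ℕ → ℝ),
        θ 0 ≠ 0 → θs ≠ 0 →
        (∀ t : ℕ, ρ t = ⟪θ t, θs⟫ / (‖θ t‖ * ‖θs‖)) →
        (∀ t : ℕ, φ t = π / 2 - Real.arccos |ρ t|) →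
        0 < |ρ 0| → |ρ 0| < 1 →
        (∀ t : ℕ, θ (t + 1) = (2 * ‖θs‖ / π) •
            ((Real.sign (ρ t) * φ t) • (‖θs‖⁻¹ • θs) +
              Real.cos (φ t) • (‖θ t‖⁻¹ • θ t))) →
        (∀ t : ℕ, Real.tanh (ν (t + 1)) =
            Real.sign (ρ 0) * (2 / π) * φ t * Real.tanh νs) →
        ∀ ε : ℝ, ε ∈ Set.Ioo 0 (1 / 2) →
          ∀ T : ℕ, (T : ℝ) ≥ C * (Real.log (1 / |ρ 0|) + Real.log (Real.log (1 / ε)) + 1) →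
            ‖θ (T + 1) - Real.sign (ρ 0) • θs‖ / ‖θs‖ < ε ∧
            |Real.tanh (ν (T + 1)) - Real.sign (ρ 0) * Real.tanh νs|
              ≤ C * Real.sqrt ε * |Real.tanh νs| := by
  refine ⟨100, by norm_num, fun d θ θs ν νs ρ φ hθ0 hθs hρ hφ hρ0 hρ1 hθ hν ε ⟨hε0, hε⟩ T hT ↦ ?_⟩
  have hφ' : ∀ t, φ t = arcsin |ρ t| := fun t ↦ by
    rw [hφ t, arccos_eq_pi_div_two_sub_arcsin]
    ring
  have hθ' : ∀ t, θ (t + 1) = EMPopulation.emStep θs (θ t) (Real.sign (ρ t)) (arcsin |ρ t|) :=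
    fun t ↦ hφ' t ▸ hθ t
  have hinv := EMPopulation.iterate_invariant hθ0 hθs hρ hρ0 hρ1 hθ'
  obtain ⟨hθT, -, hsT, hσT⟩ := hinv T
  have hconv : 1 - |ρ T| ^ 2 ≤ ε ^ 2 / 4 :=
    EMPopulation.one_sub_sq_le_of_nextCorr_iterate (fun t ↦ (hinv t).2.1) (fun t ↦ (hinv t).2.2.1)
      (EMPopulation.abs_corr_succ hθ0 hθs hρ hρ0 hρ1 hθ') hε0 hε hT
  have hcorr : EMPopulation.corr (θ T) θs = Real.sign (ρ 0) * |ρ T| := by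
    rw [← hσT, Real.sign_mul_abs, hρ]
    rfl
  have hw := norm_pos_iff.2 hθs
  constructor
  · have herr := EMPopulation.norm_emStep_arcsin_sub_sq_le hθT hθs
      (Real.sign_sq_of_ne_zero (abs_pos.1 hρ0)) (abs_nonneg _) hsT.le hcorr
    rw [hθ' T, hσT, div_lt_iff₀ hw]
    refine lt_of_pow_lt_pow_left₀ 2 (by positivity) (herr.trans_lt ?_)
    nlinarith [mul_pos (pow_pos hε0 2) (pow_pos hw 2)]
  · have hsqrt : √(1 - |ρ T| ^ 2) ≤ ε / 2 := (sqrt_le_left (by linarith)).2 (by linarith)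
    have hε_le : ε ≤ √ε := (le_sqrt hε0.le hε0.le).2 (by nlinarith)
    rw [hν T, hφ' T]
    calc _ ≤ √(1 - |ρ T| ^ 2) * |tanh νs| :=
          EMPopulation.abs_sign_mul_arcsin_mul_sub_le (Real.abs_sign_of_ne_zero (abs_pos.1 hρ0))
            (abs_nonneg _)
      _ ≤ 100 * √ε * |tanh νs| := by gcongr; linarith [sqrt_nonneg ε]
end

section
/- (Single-iteration angle perturbation.) Let d ≥ 2, let ê₁, ê₂ ∈ ℝ^d be orthonormal, let φ ∈ (0, π/2), and set ϑ := sin(φ)·ê₁ + cos(φ)·ê₂. Let ϱ ∈ ℝ^d be any vector with ‖ϱ‖ = r where 0 < r < sin φ. Define φ′ := arcsin( |⟨ϑ + ϱ, ê₁⟩| / ‖ϑ + ϱ‖ ). Then φ′ ≥ φ − arcsin(r). -/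
/-!
Since `‖e₁‖ = 1`, the sub-optimality angle of a vector `v` is at least
`arcsin (⟪v, e₁⟫ / ‖v‖) = π / 2 - ∠(v, e₁)`, and `∠(ϑ, e₁) = π / 2 - φ`. Adding `ϱ` to the unit
vector `ϑ` turns it by at most `arcsin r`, so the triangle inequality for angles gives
`∠(ϑ + ϱ, e₁) ≤ arcsin r + π / 2 - φ`.
-/

open Real
open scoped RealInnerProductSpace

namespace InnerProductGeometry

variable {V : Type*} [NormedAddCommGroup V] [InnerProductSpace ℝ V]

theorem arcsin_inner_div_norm_mul_norm (x y : V) :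
    arcsin (⟪x, y⟫ / (‖x‖ * ‖y‖)) = π / 2 - angle x y := by
  rw [angle, arccos_eq_pi_div_two_sub_arcsin]
  ring

theorem sin_angle_add_mul_norm_le {x y : V} (hxy : x + y ≠ 0) :
    sin (angle x (x + y)) * ‖x‖ ≤ ‖y‖ := by
  have hsin := sin_angle_mul_norm_mul_norm x (x + y)
  have hxy' : 0 < ‖x + y‖ := norm_pos_iff.mpr hxy
  suffices sin (angle x (x + y)) * (‖x‖ * ‖x + y‖) ≤ ‖y‖ * ‖x + y‖ by
    nlinarith
  rw [hsin, sqrt_le_left (by positivity)]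
  simp only [inner_add_right, inner_add_left, real_inner_self_eq_norm_sq, real_inner_comm x y]
  rw [mul_pow, norm_add_sq_real]
  -- the difference of the two sides is `(⟪x, y⟫ + ‖y‖ ^ 2) ^ 2`
  nlinarith [sq_nonneg (⟪x, y⟫ + ‖y‖ ^ 2)]

theorem angle_add_le_arcsin_of_norm_le {x y : V} (hx : x ≠ 0) (hy : ‖y‖ ≤ ‖x‖) :
    angle x (x + y) ≤ arcsin (‖y‖ / ‖x‖) := by
  have hx' : 0 < ‖x‖ := norm_pos_iff.mpr hx
  rcases eq_or_ne (x + y) 0 with hxy | hxy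
  · rw [eq_neg_of_add_eq_zero_right hxy, norm_neg, div_self hx'.ne', arcsin_one, add_neg_cancel,
      angle_zero_right]
  have hinner : 0 ≤ ⟪x, x + y⟫ := by
    rw [inner_add_right, real_inner_self_eq_norm_sq]
    nlinarith [neg_abs_le ⟪x, y⟫, abs_real_inner_le_norm x y]
  have hright : angle x (x + y) ≤ π / 2 := by
    rw [angle, arccos_le_pi_div_two]
    positivity
  calc angle x (x + y) = arcsin (sin (angle x (x + y))) :=
        (arcsin_sin (by linarith [angle_nonneg x (x + y), pi_pos]) hright).symm
    _ ≤ arcsin (‖y‖ / ‖x‖) :=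
        arcsin_le_arcsin ((le_div_iff₀ hx').mpr (sin_angle_add_mul_norm_le hxy))

section Orthonormal

variable {e₁ e₂ : V}

theorem inner_sin_smul_add_cos_smul_left (h₁ : ‖e₁‖ = 1) (h : ⟪e₁, e₂⟫ = 0) (φ : ℝ) :
    ⟪sin φ • e₁ + cos φ • e₂, e₁⟫ = sin φ := by
  rw [inner_add_left, real_inner_smul_left, real_inner_smul_left, real_inner_self_eq_norm_sq, h₁,
    real_inner_comm, h]
  ring

theorem norm_sin_smul_add_cos_smul (h₁ : ‖e₁‖ = 1) (h₂ : ‖e₂‖ = 1) (h : ⟪e₁, e₂⟫ = 0) (φ : ℝ) :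
    ‖sin φ • e₁ + cos φ • e₂‖ = 1 := by
  have hsq : ‖sin φ • e₁ + cos φ • e₂‖ ^ 2 = 1 := by
    rw [norm_add_sq_real, real_inner_smul_left, real_inner_smul_right, h, norm_smul, norm_smul,
      h₁, h₂, norm_eq_abs, norm_eq_abs, mul_one, mul_one, sq_abs, sq_abs, mul_zero, mul_zero,
      mul_zero, add_zero, sin_sq_add_cos_sq]
  exact (pow_eq_one_iff_of_nonneg (norm_nonneg _) two_ne_zero).mp hsq

theorem angle_sin_smul_add_cos_smul_left (h₁ : ‖e₁‖ = 1) (h₂ : ‖e₂‖ = 1) (h : ⟪e₁, e₂⟫ = 0)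
    {φ : ℝ} (hφ₀ : -(π / 2) ≤ φ) (hφ₁ : φ ≤ π / 2) :
    angle (sin φ • e₁ + cos φ • e₂) e₁ = π / 2 - φ := by
  rw [angle, inner_sin_smul_add_cos_smul_left h₁ h, norm_sin_smul_add_cos_smul h₁ h₂ h, h₁,
    mul_one, div_one, arccos_eq_pi_div_two_sub_arcsin, arcsin_sin hφ₀ hφ₁]

end Orthonormal

end InnerProductGeometry

open InnerProductGeometry

theorem single_iteration_angle_perturbation_general {d : ℕ}
    (e1 e2 : EuclideanSpace ℝ (Fin d))
    (he1 : ‖e1‖ = 1) (he2 : ‖e2‖ = 1) (horth : ⟪e1, e2⟫ = 0)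
    (φ : ℝ) (hφ : φ ∈ Set.Ioo 0 (π / 2))
    (ϑ : EuclideanSpace ℝ (Fin d)) (hϑ : ϑ = Real.sin φ • e1 + Real.cos φ • e2)
    (ϱ : EuclideanSpace ℝ (Fin d)) (r : ℝ) (hr : ‖ϱ‖ = r)
    (hrφ : r < Real.sin φ)
    (φ' : ℝ) (hφ' : φ' = Real.arcsin (|⟪ϑ + ϱ, e1⟫| / ‖ϑ + ϱ‖)) :
    φ' ≥ φ - Real.arcsin r := by
  obtain ⟨hφ₀, hφ₁⟩ := hφ
  subst hϑ hr hφ'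
  set ϑ := sin φ • e1 + cos φ • e2
  have hϑ : ‖ϑ‖ = 1 := norm_sin_smul_add_cos_smul he1 he2 horth φ
  have hturn : angle ϑ (ϑ + ϱ) ≤ arcsin ‖ϱ‖ := by
    have hϑ₀ : ϑ ≠ 0 := norm_ne_zero_iff.mp (by rw [hϑ]; exact one_ne_zero)
    simpa only [hϑ, div_one] using
      angle_add_le_arcsin_of_norm_le hϑ₀ (by rw [hϑ]; linarith [sin_le_one φ])
  have htriangle := angle_le_angle_add_angle (ϑ + ϱ) ϑ e1
  rw [angle_comm (ϑ + ϱ) ϑ,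
    angle_sin_smul_add_cos_smul_left he1 he2 horth (by linarith) hφ₁.le] at htriangle
  calc arcsin (|⟪ϑ + ϱ, e1⟫| / ‖ϑ + ϱ‖)
      ≥ arcsin (⟪ϑ + ϱ, e1⟫ / (‖ϑ + ϱ‖ * ‖e1‖)) := by
        rw [he1, mul_one]
        exact arcsin_le_arcsin (div_le_div_of_nonneg_right (le_abs_self _) (norm_nonneg _))
    _ = π / 2 - angle (ϑ + ϱ) e1 := arcsin_inner_div_norm_mul_norm _ _
    _ ≥ φ - arcsin ‖ϱ‖ := by linarith

/-- (Single-iteration angle perturbation.)  Let `ê₁, ê₂` be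
orthonormal in `ℝ^d` (`d ≥ 2`), `φ ∈ (0, π/2)`, `ϑ = sin φ ê₁ + cos φ ê₂`, and let
`ϱ` have norm `r` with `0 < r < sin φ`.  Then
`φ' = arcsin(|⟪ϑ + ϱ, ê₁⟫|/‖ϑ + ϱ‖)` satisfies `φ' ≥ φ - arcsin r`. -/
theorem single_iteration_angle_perturbation {d : ℕ} (hd : 2 ≤ d)
    (e1 e2 : EuclideanSpace ℝ (Fin d))
    (he1 : ‖e1‖ = 1) (he2 : ‖e2‖ = 1) (horth : ⟪e1, e2⟫ = 0)
    (φ : ℝ) (hφ : φ ∈ Set.Ioo 0 (π / 2))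
    (ϑ : EuclideanSpace ℝ (Fin d)) (hϑ : ϑ = Real.sin φ • e1 + Real.cos φ • e2)
    (ϱ : EuclideanSpace ℝ (Fin d)) (r : ℝ) (hr : ‖ϱ‖ = r)
    (hr0 : 0 < r) (hrφ : r < Real.sin φ)
    (φ' : ℝ) (hφ' : φ' = Real.arcsin (|⟪ϑ + ϱ, e1⟫| / ‖ϑ + ϱ‖)) :
    φ' ≥ φ - Real.arcsin r :=
  single_iteration_angle_perturbation_general e1 e2 he1 he2 horth φ hφ ϑ hϑ ϱ r hr hrφ φ' hφ'
end

section
/- (Moment and sub-exponential bound.) Let λ₁, λ₂ be independent standard normal random variables, let ρ ∈ [−1, 1], and define Z := |λ₁| · |ρ·λ₁ + √(1−ρ²)·λ₂|. Then for every integer q ≥ 2: E[Z^q] ≤ 2^q · q!, and ( E[ |Z − E[Z]|^q ] )^{1/q} ≤ 2.91 · q. -/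
/-!
The rotation `W = ρ λ₁ + √(1 - ρ²) λ₂` of the independent pair is again standard normal. Hence
AM-GM, `Z ^ k = |λ₁| ^ k |W| ^ k ≤ (λ₁ ^ (2k) + W ^ (2k)) / 2`, gives `E[Z ^ k] ≤ E[λ₁ ^ (2k)] =
(2k - 1)‼ ≤ 2 ^ k k!`, the Gaussian moments being read off `Γ(k + 1/2)`. For `k = 1` this says
`0 ≤ E Z ≤ 1`, so `|Z - E Z| ≤ max Z 1` and `E|Z - E Z| ^ q ≤ 2 ^ q q! + 1 ≤ (2.91 q) ^ q`.
-/

open MeasureTheory ProbabilityTheory Real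
open scoped Nat NNReal

theorem Nat.doubleFactorial_le_doubleFactorial_succ : ∀ n : ℕ, n‼ ≤ (n + 1)‼
  | 0 => le_rfl
  | 1 => by decide
  | n + 2 => by
    rw [Nat.doubleFactorial_add_two, Nat.doubleFactorial_add_two (n + 1)]
    exact Nat.mul_le_mul (by omega) (Nat.doubleFactorial_le_doubleFactorial_succ n)

theorem Nat.doubleFactorial_two_mul_sub_one_le (k : ℕ) : (2 * k - 1)‼ ≤ 2 ^ k * k ! := by
  rw [← Nat.doubleFactorial_two_mul]
  rcases k with _ | k
  · rfl
  · simpa [show 2 * (k + 1) = 2 * k + 1 + 1 by ring] using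
      Nat.doubleFactorial_le_doubleFactorial_succ (2 * k + 1)

theorem abs_mul_abs_pow_le (x y : ℝ) (k : ℕ) :
    (|x| * |y|) ^ k ≤ (x ^ (2 * k) + y ^ (2 * k)) / 2 := by
  have := two_mul_le_add_sq (|x| ^ k) (|y| ^ k)
  rw [← pow_mul, ← pow_mul, mul_comm k, (even_two_mul k).pow_abs, (even_two_mul k).pow_abs]
    at this
  rw [mul_pow]
  linarith

theorem integral_Ioi_pow_two_mul_mul_exp_neg_half_sq (k : ℕ) :
    ∫ x in Set.Ioi (0 : ℝ), x ^ (2 * k) * rexp (-(1 / 2) * x ^ 2) =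
      (2 * k - 1)‼ * √(2 * π) / 2 := by
  have h_gamma := integral_rpow_mul_exp_neg_mul_rpow (p := 2) (q := 2 * k) (b := 1 / 2)
    (by norm_num) (by linarith [k.cast_nonneg (α := ℝ)]) (by norm_num)
  rw [show ((2 * k : ℝ) + 1) / 2 = k + 1 / 2 by ring, Gamma_nat_add_half,
    show -((2 * k : ℝ) + 1) / 2 = -k + -(1 / 2) by ring, rpow_add (by norm_num),
    rpow_neg (by norm_num), rpow_neg (by norm_num), rpow_natCast, ← sqrt_eq_rpow] at h_gamma
  convert h_gamma using 1
  · refine setIntegral_congr_fun measurableSet_Ioi fun x _ => ?_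
    rw [← rpow_natCast, ← rpow_natCast x 2]
    push_cast
    rfl
  · rw [sqrt_mul zero_le_two, one_div, inv_pow, sqrt_inv]
    field_simp

namespace ProbabilityTheory

theorem integral_pow_two_mul_gaussianReal (k : ℕ) :
    ∫ x, x ^ (2 * k) ∂gaussianReal 0 1 = (2 * k - 1)‼ := by
  have h_even (x : ℝ) : gaussianPDFReal 0 1 x • x ^ (2 * k) =
      (√(2 * π))⁻¹ * (|x| ^ (2 * k) * rexp (-(1 / 2) * |x| ^ 2)) := by
    simp only [gaussianPDFReal, smul_eq_mul, pow_mul, sq_abs]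
    push_cast
    ring_nf
  simp_rw [integral_gaussianReal_eq_integral_smul one_ne_zero, h_even, integral_const_mul,
    integral_comp_abs (f := fun y => y ^ (2 * k) * rexp (-(1 / 2) * y ^ 2)),
    integral_Ioi_pow_two_mul_mul_exp_neg_half_sq]
  field_simp

variable {Ω : Type*} [MeasurableSpace Ω] {μ : Measure Ω} {X Y : Ω → ℝ}

theorem integrable_pow_two_mul_of_hasLaw_gaussianReal {m : ℝ} {v : ℝ≥0}
    (hX : HasLaw X (gaussianReal m v) μ) (k : ℕ) : Integrable (fun ω => X ω ^ (2 * k)) μ := by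
  have h : Integrable (fun x : ℝ => ‖x‖ ^ (2 * k)) (gaussianReal m v) :=
    (memLp_id_gaussianReal (2 * k : ℕ)).integrable_norm_pow'
  simp_rw [Real.norm_eq_abs, (even_two_mul k).pow_abs] at h
  rw [← hX.map_eq] at h
  exact h.comp_aemeasurable hX.aemeasurable

theorem hasLaw_gaussianReal_mul_add_mul
    (hX : HasLaw X (gaussianReal 0 1) μ) (hY : HasLaw Y (gaussianReal 0 1) μ)
    (hXY : IndepFun X Y μ) {a b : ℝ} (hab : a ^ 2 + b ^ 2 = 1) :
    HasLaw (fun ω => a * X ω + b * Y ω) (gaussianReal 0 1) μ := by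
  have h := (hXY.comp (measurable_const_mul a) (measurable_const_mul b)).hasLaw_fun_add
    (gaussianReal_const_mul hX a) (gaussianReal_const_mul hY b)
  rwa [gaussianReal_conv_gaussianReal, mul_zero, mul_zero, add_zero, mul_one, mul_one,
    show NNReal.mk (a ^ 2) (sq_nonneg a) + NNReal.mk (b ^ 2) (sq_nonneg b) = 1 from
      NNReal.eq hab] at h

theorem integral_pow_two_mul_of_hasLaw_gaussianReal (hX : HasLaw X (gaussianReal 0 1) μ)
    (k : ℕ) : ∫ ω, X ω ^ (2 * k) ∂μ = (2 * k - 1)‼ :=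
  (hX.integral_comp (f := fun x => x ^ (2 * k)) (by fun_prop)).trans
    (integral_pow_two_mul_gaussianReal k)

section StandardGaussianPair

variable (hX : HasLaw X (gaussianReal 0 1) μ) (hY : HasLaw Y (gaussianReal 0 1) μ)
include hX hY

theorem integrable_abs_mul_abs_pow_of_hasLaw_gaussianReal (k : ℕ) :
    Integrable (fun ω => (|X ω| * |Y ω|) ^ k) μ := by
  refine ((integrable_pow_two_mul_of_hasLaw_gaussianReal hX k).add
    (integrable_pow_two_mul_of_hasLaw_gaussianReal hY k)).div_const 2 |>.mono' ?_ ?_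
  · have := hX.aemeasurable; have := hY.aemeasurable
    fun_prop
  · refine .of_forall fun ω => ?_
    rw [Real.norm_of_nonneg (by positivity)]
    exact abs_mul_abs_pow_le _ _ k

theorem integral_abs_mul_abs_pow_le_of_hasLaw_gaussianReal (k : ℕ) :
    ∫ ω, (|X ω| * |Y ω|) ^ k ∂μ ≤ (2 * k - 1)‼ := by
  calc ∫ ω, (|X ω| * |Y ω|) ^ k ∂μ ≤ ∫ ω, (X ω ^ (2 * k) + Y ω ^ (2 * k)) / 2 ∂μ :=
        integral_mono (integrable_abs_mul_abs_pow_of_hasLaw_gaussianReal hX hY k)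
          (((integrable_pow_two_mul_of_hasLaw_gaussianReal hX k).add
            (integrable_pow_two_mul_of_hasLaw_gaussianReal hY k)).div_const 2)
          fun ω => abs_mul_abs_pow_le _ _ k
    _ = (2 * k - 1)‼ := by
      rw [integral_div, integral_add (integrable_pow_two_mul_of_hasLaw_gaussianReal hX k)
        (integrable_pow_two_mul_of_hasLaw_gaussianReal hY k),
        integral_pow_two_mul_of_hasLaw_gaussianReal hX,
        integral_pow_two_mul_of_hasLaw_gaussianReal hY]
      ring

end StandardGaussianPair

end ProbabilityTheory

theorem abs_sub_pow_le_pow_add_one {z c : ℝ} (hz : 0 ≤ z) (hc : c ∈ Set.Icc (0 : ℝ) 1) (q : ℕ) :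
    |z - c| ^ q ≤ z ^ q + 1 := by
  have h_abs : |z - c| ≤ max z 1 := abs_sub_le_iff.2 ⟨by linarith [le_max_left z 1, hc.1],
    by linarith [le_max_right z 1, hc.2]⟩
  calc |z - c| ^ q ≤ max z 1 ^ q := pow_le_pow_left₀ (abs_nonneg _) h_abs q
    _ ≤ z ^ q + 1 := by
      rcases max_choice z 1 with h | h <;> rw [h]
      · linarith
      · rw [one_pow]; linarith [pow_nonneg hz q]

theorem integral_abs_sub_pow_le_integral_pow_add_one {Ω : Type*} [MeasurableSpace Ω] {μ : Measure Ω}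
    [IsProbabilityMeasure μ] {Z : Ω → ℝ} {c : ℝ} {q : ℕ}
    (hZ : ∀ ω, 0 ≤ Z ω) (hZm : AEStronglyMeasurable Z μ) (hZq : Integrable (fun ω => Z ω ^ q) μ)
    (hc : c ∈ Set.Icc (0 : ℝ) 1) :
    ∫ ω, |Z ω - c| ^ q ∂μ ≤ ∫ ω, Z ω ^ q ∂μ + 1 := by
  have h_bound (ω : Ω) : |Z ω - c| ^ q ≤ Z ω ^ q + 1 := abs_sub_pow_le_pow_add_one (hZ ω) hc q
  have h_int : Integrable (fun ω => Z ω ^ q + 1) μ := hZq.add (integrable_const 1)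
  calc ∫ ω, |Z ω - c| ^ q ∂μ ≤ ∫ ω, (Z ω ^ q + 1) ∂μ :=
        integral_mono (h_int.mono' (by fun_prop) (.of_forall fun ω => by
          rw [Real.norm_of_nonneg (by positivity)]; exact h_bound ω)) h_int h_bound
    _ = ∫ ω, Z ω ^ q ∂μ + 1 := by
      rw [integral_add hZq (integrable_const 1), integral_const, probReal_univ, one_smul]

theorem two_pow_mul_factorial_add_one_le {q : ℕ} (hq : 2 ≤ q) :
    (2 : ℝ) ^ q * q ! + 1 ≤ (2.91 * q) ^ q := by
  have h_fact : (q ! : ℝ) ≤ (q : ℝ) ^ q := by exact_mod_cast Nat.factorial_le_pow q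
  have h_one : (1 : ℝ) ≤ 2 ^ q * q ! := one_le_mul_of_one_le_of_one_le (one_le_pow₀ one_le_two)
    (by exact_mod_cast Nat.one_le_iff_ne_zero.2 (Nat.factorial_ne_zero q))
  have h_base : (2 : ℝ) ≤ 1.455 ^ q :=
    (by norm_num : (2 : ℝ) ≤ 1.455 ^ 2).trans (pow_le_pow_right₀ (by norm_num) hq)
  calc (2 : ℝ) ^ q * q ! + 1 ≤ 2 ^ q * q ! * 2 := by linarith
    _ ≤ 2 ^ q * q ^ q * 1.455 ^ q := by gcongr
    _ = (2.91 * q) ^ q := by rw [← mul_pow, ← mul_pow]; ring_nf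

theorem projected_error_moment_bound_general {Ω : Type*} [MeasurableSpace Ω]
    (μ : Measure Ω) [IsProbabilityMeasure μ]
    (l1 l2 : Ω → ℝ)
    (hind : IndepFun l1 l2 μ)
    (hl1 : μ.map l1 = gaussianReal 0 1) (hl2 : μ.map l2 = gaussianReal 0 1)
    (ρ : ℝ) (hρ : ρ ∈ Set.Icc (-1 : ℝ) 1)
    (Z : Ω → ℝ)
    (hZ : Z = fun ω => |l1 ω| * |ρ * l1 ω + Real.sqrt (1 - ρ ^ 2) * l2 ω|)
    (q : ℕ) (hq : 2 ≤ q) :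
    (∫ ω, (Z ω) ^ q ∂μ) ≤ 2 ^ q * (Nat.factorial q) ∧
    (∫ ω, |Z ω - ∫ ω', Z ω' ∂μ| ^ q ∂μ) ^ ((1 : ℝ) / q) ≤ 2.91 * q := by
  have hX : HasLaw l1 (gaussianReal 0 1) μ :=
    ⟨.of_map_ne_zero (hl1 ▸ IsProbabilityMeasure.ne_zero _), hl1⟩
  have hY : HasLaw l2 (gaussianReal 0 1) μ :=
    ⟨.of_map_ne_zero (hl2 ▸ IsProbabilityMeasure.ne_zero _), hl2⟩
  have hs : √(1 - ρ ^ 2) ^ 2 = 1 - ρ ^ 2 :=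
    sq_sqrt (sub_nonneg.2 ((sq_le_one_iff_abs_le_one ρ).2 (abs_le.2 hρ)))
  have hW := hasLaw_gaussianReal_mul_add_mul hX hY hind (a := ρ) (b := √(1 - ρ ^ 2))
    (by rw [hs]; ring)
  have hZ_nonneg (ω : Ω) : 0 ≤ Z ω := by rw [hZ]; positivity
  have hZ_int (k : ℕ) : Integrable (fun ω => Z ω ^ k) μ := by
    rw [hZ]; exact integrable_abs_mul_abs_pow_of_hasLaw_gaussianReal hX hW k
  have hZ_moment (k : ℕ) : ∫ ω, Z ω ^ k ∂μ ≤ (2 * k - 1)‼ := by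
    rw [hZ]; exact integral_abs_mul_abs_pow_le_of_hasLaw_gaussianReal hX hW k
  have h_mean : ∫ ω, Z ω ∂μ ∈ Set.Icc (0 : ℝ) 1 :=
    ⟨integral_nonneg hZ_nonneg, by simpa using hZ_moment 1⟩
  have h_moment_q : ∫ ω, Z ω ^ q ∂μ ≤ 2 ^ q * q ! :=
    (hZ_moment q).trans (mod_cast Nat.doubleFactorial_two_mul_sub_one_le q)
  refine ⟨h_moment_q, ?_⟩
  rw [one_div, rpow_inv_le_iff_of_pos (by positivity) (by positivity) (by positivity),
    rpow_natCast]
  calc _ ≤ ∫ ω, Z ω ^ q ∂μ + 1 := integral_abs_sub_pow_le_integral_pow_add_one hZ_nonneg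
        (by simpa using (hZ_int 1).aestronglyMeasurable) (hZ_int q) h_mean
    _ ≤ 2 ^ q * q ! + 1 := by gcongr
    _ ≤ (2.91 * q) ^ q := two_pow_mul_factorial_add_one_le hq

/-- (Moment and sub-exponential bound.)  Let `λ₁, λ₂` be
independent standard normal random variables, `ρ ∈ [-1, 1]`, and
`Z = |λ₁| |ρ λ₁ + √(1-ρ²) λ₂|`.  Then for every integer `q ≥ 2`:
`E[Z^q] ≤ 2^q q!` and `(E|Z - E Z|^q)^{1/q} ≤ 2.91 q`. -/
theorem projected_error_moment_bound {Ω : Type*} [MeasurableSpace Ω]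
    (μ : Measure Ω) [IsProbabilityMeasure μ]
    (l1 l2 : Ω → ℝ) (h1 : Measurable l1) (h2 : Measurable l2)
    (hind : IndepFun l1 l2 μ)
    (hl1 : μ.map l1 = gaussianReal 0 1) (hl2 : μ.map l2 = gaussianReal 0 1)
    (ρ : ℝ) (hρ : ρ ∈ Set.Icc (-1 : ℝ) 1)
    (Z : Ω → ℝ)
    (hZ : Z = fun ω => |l1 ω| * |ρ * l1 ω + Real.sqrt (1 - ρ ^ 2) * l2 ω|)
    (q : ℕ) (hq : 2 ≤ q) :
    (∫ ω, (Z ω) ^ q ∂μ) ≤ 2 ^ q * (Nat.factorial q) ∧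
    (∫ ω, |Z ω - ∫ ω', Z ω' ∂μ| ^ q ∂μ) ^ ((1 : ℝ) / q) ≤ 2.91 * q :=
  projected_error_moment_bound_general μ l1 l2 hind hl1 hl2 ρ hρ Z hZ q hq
end
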